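/- arXiv:2012.13790 — 4 statements merged into one kernel-verified Lean document; each statement's English description precedes it below -/
import Mathlib

section
/- Let T: C → E be a unital weak trace functor on a monoidal category C, i.e. a weak trace functor satisfying T(r_X) ∘ tr_{𝟙,X} = T(l_X) for all X. Then tr_{Y,X} ∘ tr_{X,Y} = id_{T(X⊗Y)} for all objects X, Y of C. -/
/-!
Specialise the trace condition to `Z = 𝟙`. Unitality turns `tr_{𝟙, X ⊗ Y}` into `T(λ ≫ ρ⁻¹)`,
naturality transports `tr_{𝟙 ⊗ X, Y}` and `tr_{Y ⊗ 𝟙, X}` to `tr_{X,Y}` and `tr_{Y,X}`, and by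
coherence the remaining structure maps collapse, leaving
`T(λ) ≫ T(ρ⁻¹) = T(λ) ≫ tr_{X,Y} ≫ tr_{Y,X} ≫ T(ρ⁻¹)`; cancel the isomorphisms on both sides.
-/

open CategoryTheory MonoidalCategory

universe v u v' u'

section

variable {C : Type u} [Category.{v} C] [MonoidalCategory C] {E : Type u'} [Category.{v'} E]
  {T : C ⥤ E} {tr : ∀ X Y : C, T.obj (X ⊗ Y) ≅ T.obj (Y ⊗ X)}

lemma tr_hom_eq_conj_of_iso
    (tr_natural : ∀ {X X' Y Y' : C} (f : X ⟶ X') (g : Y ⟶ Y'),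
      T.map (f ⊗ₘ g) ≫ (tr X' Y').hom = (tr X Y).hom ≫ T.map (g ⊗ₘ f))
    {X X' Y Y' : C} (f : X ≅ X') (g : Y ≅ Y') :
    (tr X Y).hom = T.map (f.hom ⊗ₘ g.hom) ≫ (tr X' Y').hom ≫ T.map (g.inv ⊗ₘ f.inv) := by
  rw [← Category.assoc, tr_natural, Category.assoc, ← T.map_comp, tensorHom_comp_tensorHom]
  simp

lemma tr_unit_hom_eq (unital : ∀ X : C, (tr (𝟙_ C) X).hom ≫ T.map (ρ_ X).hom = T.map (λ_ X).hom)
    (X : C) : (tr (𝟙_ C) X).hom = T.map ((λ_ X).hom ≫ (ρ_ X).inv) := by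
  rw [T.map_comp, ← unital, Category.assoc, ← T.map_comp]
  simp

end

theorem stmt_2 {C : Type u} [Category.{v} C] [MonoidalCategory C]
    {E : Type u'} [Category.{v'} E]
    (T : C ⥤ E)
    (tr : ∀ X Y : C, T.obj (X ⊗ Y) ≅ T.obj (Y ⊗ X))
    (tr_natural : ∀ {X X' Y Y' : C} (f : X ⟶ X') (g : Y ⟶ Y'),
      T.map (f ⊗ₘ g) ≫ (tr X' Y').hom = (tr X Y).hom ≫ T.map (g ⊗ₘ f))
    (trace0 : ∀ X Y Z : C,
      (tr Z (X ⊗ Y)).hom =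
        T.map (α_ Z X Y).inv ≫ (tr (Z ⊗ X) Y).hom ≫ T.map (α_ Y Z X).inv ≫
          (tr (Y ⊗ Z) X).hom ≫ T.map (α_ X Y Z).inv)
    (unital : ∀ X : C, (tr (𝟙_ C) X).hom ≫ T.map (ρ_ X).hom = T.map (λ_ X).hom) :
    ∀ X Y : C, (tr X Y).hom ≫ (tr Y X).hom = 𝟙 (T.obj (X ⊗ Y)) := by
  intro X Y
  have h := trace0 X Y (𝟙_ C)
  rw [tr_unit_hom_eq unital, tr_hom_eq_conj_of_iso tr_natural (λ_ X) (Iso.refl Y),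
    tr_hom_eq_conj_of_iso tr_natural (ρ_ Y) (Iso.refl X)] at h
  simp only [Iso.refl_hom, Iso.refl_inv, Category.assoc, ← T.map_comp_assoc, ← T.map_comp] at h
  have hleft : (α_ (𝟙_ C) X Y).inv ≫ ((λ_ X).hom ⊗ₘ 𝟙 Y) = (λ_ (X ⊗ Y)).hom := by monoidal
  have hmid : (𝟙 Y ⊗ₘ (λ_ X).inv) ≫ (α_ Y (𝟙_ C) X).inv ≫ ((ρ_ Y).hom ⊗ₘ 𝟙 X) = 𝟙 (Y ⊗ X) := by
    monoidal
  have hright : (𝟙 X ⊗ₘ (ρ_ Y).inv) ≫ (α_ X Y (𝟙_ C)).inv = (ρ_ (X ⊗ Y)).inv := by monoidal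
  rw [hleft, hmid, hright, T.map_id, Category.id_comp, T.map_comp, cancel_epi, ← Category.assoc] at h
  exact (cancel_mono _).1 (h.symm.trans (Category.id_comp _).symm)
end

section
/- Let C be a biclosed monoidal category, viewed as a bimodule category over C^op via the adjoint actions Y ⊳ Z := hom^r(Y,Z) and Z ⊲ Y := hom^ℓ(Y,Z). If (M, τ) is an object of the centre Z_{C^op}(C) of this bimodule category, then T := Hom_C(-, M), equipped with the isomorphisms tr_{X,Y} := ζ⁻¹ ∘ Hom_C(X, τ_Y) ∘ ξ (where ξ: Hom_C(X ⊗ Y, Z) ≅ Hom_C(X, hom^r(Y,Z)) and ζ: Hom_C(X ⊗ Y, Z) ≅ Hom_C(Y, hom^ℓ(X,Z)) are the adjunctions), is a weak trace functor C → k-Mod; it is unital if M lies in the stable centre Z'_{C^op}(C). -/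
/-!
STATEMENT 3: Let C be a biclosed monoidal category, viewed as a bimodule category
over Cᵒᵖ via the adjoint actions `Y ⊳ Z := hom^r(Y,Z)` and `Z ⊲ Y := hom^ℓ(Y,Z)`.
If `(M, τ)` is an object of the centre `Z_{Cᵒᵖ}(C)` of this bimodule category, then
`T := Hom_C(-, M)`, equipped with the isomorphisms `tr_{X,Y} := ζ⁻¹ ∘ Hom_C(X, τ_Y) ∘ ξ`
(where `ξ : Hom(X ⊗ Y, Z) ≅ Hom(X, hom^r(Y,Z))` and
`ζ : Hom(X ⊗ Y, Z) ≅ Hom(Y, hom^ℓ(X,Z))` are the adjunctions), is a weak trace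
functor; it is unital if `M` lies in the stable centre `Z'_{Cᵒᵖ}(C)`.

The bimodule-category constraints `φ`, `ψ`, `θ` are the canonical adjunction-induced
ones; this is expressed by the characterizing hypotheses `hφ`, `hψ`, `hθ`.  The weak
trace functor structure on the contravariant functor `Hom_C(-, M)` is expressed
elementwise: a family of bijections `tr_{X,Y} : Hom(X ⊗ Y, M) ≃ Hom(Y ⊗ X, M)`,
natural in X and Y, satisfying the weak trace axiom (and the unitality axiom when
`M` is stable, i.e. when `id_M` is fixed by the canonical chain of isomorphisms).
-/

open CategoryTheory MonoidalCategory Opposite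

universe v u

theorem stmt_3 {C : Type u} [Category.{v} C] [MonoidalCategory C]
    (homr homl : Cᵒᵖ ⥤ C ⥤ C)
    -- the two internal-Hom adjunctions of the biclosed structure
    (ξ : ∀ X Y Z : C, (X ⊗ Y ⟶ Z) ≃ (X ⟶ (homr.obj (op Y)).obj Z))
    (ζ : ∀ X Y Z : C, (X ⊗ Y ⟶ Z) ≃ (Y ⟶ (homl.obj (op X)).obj Z))
    (ξ_nat_dom : ∀ {X X' Y Z : C} (w : X' ⟶ X) (f : X ⊗ Y ⟶ Z),
      ξ X' Y Z (w ▷ Y ≫ f) = w ≫ ξ X Y Z f)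
    (ξ_nat_mid : ∀ {X Y Y' Z : C} (g : Y' ⟶ Y) (f : X ⊗ Y ⟶ Z),
      ξ X Y' Z (X ◁ g ≫ f) = ξ X Y Z f ≫ (homr.map g.op).app Z)
    (ξ_nat_cod : ∀ {X Y Z Z' : C} (h : Z ⟶ Z') (f : X ⊗ Y ⟶ Z),
      ξ X Y Z' (f ≫ h) = ξ X Y Z f ≫ (homr.obj (op Y)).map h)
    (ζ_nat_dom : ∀ {X Y Y' Z : C} (w : Y' ⟶ Y) (f : X ⊗ Y ⟶ Z),
      ζ X Y' Z (X ◁ w ≫ f) = w ≫ ζ X Y Z f)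
    (ζ_nat_mid : ∀ {X X' Y Z : C} (g : X' ⟶ X) (f : X ⊗ Y ⟶ Z),
      ζ X' Y Z (g ▷ Y ≫ f) = ζ X Y Z f ≫ (homl.map g.op).app Z)
    (ζ_nat_cod : ∀ {X Y Z Z' : C} (h : Z ⟶ Z') (f : X ⊗ Y ⟶ Z),
      ζ X Y Z' (f ≫ h) = ζ X Y Z f ≫ (homl.obj (op X)).map h)
    -- the canonical associativity and middle associativity constraints of the
    -- bimodule category structure of C over Cᵒᵖ, characterized via the adjunctions
    (φc : ∀ X Y m : C, (homr.obj (op (X ⊗ Y))).obj m ≅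
      (homr.obj (op X)).obj ((homr.obj (op Y)).obj m))
    (hφ : ∀ (X Y m W : C) (h : W ⊗ (X ⊗ Y) ⟶ m),
      ξ W (X ⊗ Y) m h ≫ (φc X Y m).hom =
        ξ W X ((homr.obj (op Y)).obj m) (ξ (W ⊗ X) Y m ((α_ W X Y).hom ≫ h)))
    (ψc : ∀ m X Y : C, (homl.obj (op (X ⊗ Y))).obj m ≅
      (homl.obj (op Y)).obj ((homl.obj (op X)).obj m))
    (hψ : ∀ (m X Y W : C) (h : (X ⊗ Y) ⊗ W ⟶ m),
      ζ (X ⊗ Y) W m h ≫ (ψc m X Y).hom =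
        ζ Y W ((homl.obj (op X)).obj m) (ζ X (Y ⊗ W) m ((α_ X Y W).inv ≫ h)))
    (θc : ∀ X m Z : C, (homl.obj (op Z)).obj ((homr.obj (op X)).obj m) ≅
      (homr.obj (op X)).obj ((homl.obj (op Z)).obj m))
    (hθ : ∀ (X m Z W : C) (g : W ⟶ (homl.obj (op Z)).obj ((homr.obj (op X)).obj m)),
      g ≫ (θc X m Z).hom =
        ξ W X ((homl.obj (op Z)).obj m)
          (ζ Z (W ⊗ X) m ((α_ Z W X).inv ≫
            (ξ (Z ⊗ W) X m).symm ((ζ Z W ((homr.obj (op X)).obj m)).symm g))))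
    -- an object of the centre of the bimodule category: a central structure on M
    (M : C)
    (τ : ∀ X : C, (homr.obj (op X)).obj M ≅ (homl.obj (op X)).obj M)
    (τ_nat : ∀ {X X' : C} (f : X ⟶ X'),
      (homr.map f.op).app M ≫ (τ X).hom = (τ X').hom ≫ (homl.map f.op).app M)
    (hexagon : ∀ X Z : C,
      (τ (X ⊗ Z)).hom ≫ (ψc M X Z).hom =
        (φc X Z M).hom ≫ (homr.obj (op X)).map (τ Z).hom ≫ (θc X M Z).inv ≫
          (homl.obj (op Z)).map (τ X).hom) :
    -- conclusion: `tr_{X,Y} := ζ⁻¹ ∘ Hom_C(X, τ_Y) ∘ ξ` is a weak trace functor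
    -- on `Hom_C(-, M)`, unital whenever `M` is stable
    ∃ tr : ∀ X Y : C, (X ⊗ Y ⟶ M) ≃ (Y ⊗ X ⟶ M),
      (∀ (X Y : C) (f : X ⊗ Y ⟶ M),
        tr X Y f = (ζ Y X M).symm (ξ X Y M f ≫ (τ Y).hom)) ∧
      (∀ {X X' Y : C} (w : X' ⟶ X) (f : X ⊗ Y ⟶ M),
        tr X' Y (w ▷ Y ≫ f) = Y ◁ w ≫ tr X Y f) ∧
      (∀ {X Y Y' : C} (g : Y' ⟶ Y) (f : X ⊗ Y ⟶ M),
        tr X Y' (X ◁ g ≫ f) = g ▷ X ≫ tr X Y f) ∧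
      (∀ (X Y Z : C) (f : Z ⊗ (X ⊗ Y) ⟶ M),
        tr Z (X ⊗ Y) f =
          (α_ X Y Z).hom ≫
            tr (Y ⊗ Z) X ((α_ Y Z X).hom ≫
              tr (Z ⊗ X) Y ((α_ Z X Y).hom ≫ f))) ∧
      (((ζ M (𝟙_ C) M).symm (ξ (𝟙_ C) M M (λ_ M).hom ≫ (τ M).hom) = (ρ_ M).hom) →
        ∀ (X : C) (f : X ⟶ M),
          tr (𝟙_ C) X ((λ_ X).hom ≫ f) = (ρ_ X).hom ≫ f) := by
  classical
  set tr : ∀ X Y : C, (X ⊗ Y ⟶ M) ≃ (Y ⊗ X ⟶ M) :=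
    fun X Y => ((ξ X Y M).trans ((Iso.refl X).homCongr (τ Y))).trans (ζ Y X M).symm with htr0
  have htr : ∀ (X Y : C) (f : X ⊗ Y ⟶ M),
      tr X Y f = (ζ Y X M).symm (ξ X Y M f ≫ (τ Y).hom) := by
    intro X Y f
    simp [htr0, Iso.homCongr]
  refine ⟨tr, htr, ?_, ?_, ?_, ?_⟩
  · intro X X' Y w f
    apply (ζ Y X' M).injective
    rw [htr, htr, Equiv.apply_symm_apply, ζ_nat_dom, Equiv.apply_symm_apply,
      ξ_nat_dom, Category.assoc]
  · intro X Y Y' g f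
    apply (ζ Y' X M).injective
    rw [htr, htr, Equiv.apply_symm_apply, ζ_nat_mid, Equiv.apply_symm_apply,
      ξ_nat_mid, Category.assoc, τ_nat, Category.assoc]
  · intro X Y Z f
    set a := ξ (Z ⊗ X) Y M ((α_ Z X Y).hom ≫ f) with ha
    set g := tr (Z ⊗ X) Y ((α_ Z X Y).hom ≫ f) with hg
    set d := ξ (Y ⊗ Z) X M ((α_ Y Z X).hom ≫ g) with hd
    set h := tr (Y ⊗ Z) X ((α_ Y Z X).hom ≫ g) with hh
    have hga : ζ Y (Z ⊗ X) M g = a ≫ (τ Y).hom := by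
      rw [hg, htr, Equiv.apply_symm_apply]
    have hhd : ζ X (Y ⊗ Z) M h = d ≫ (τ X).hom := by
      rw [hh, htr, Equiv.apply_symm_apply]
    have claim : ξ Z X ((homl.obj (op Y)).obj M) (a ≫ (τ Y).hom) ≫ (θc X M Y).inv
        = ζ Y Z ((homr.obj (op X)).obj M) d := by
      rw [Iso.comp_inv_eq, hθ X M Y Z]
      congr 1
      rw [Equiv.symm_apply_apply, hd, Equiv.symm_apply_apply, Iso.inv_hom_id_assoc, hga]
    apply (ζ (X ⊗ Y) Z M).injective
    rw [← cancel_mono (ψc M X Y).hom]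
    have lhs : ζ (X ⊗ Y) Z M (tr Z (X ⊗ Y) f) ≫ (ψc M X Y).hom
        = ζ Y Z ((homl.obj (op X)).obj M) (d ≫ (τ X).hom) := by
      rw [htr, Equiv.apply_symm_apply, Category.assoc, hexagon,
        reassoc_of% (hφ X Y M Z f), ← reassoc_of% (ξ_nat_cod (τ Y).hom a),
        ← Category.assoc, claim, ← ζ_nat_cod]
    rw [lhs, hψ M X Y Z, Iso.inv_hom_id_assoc, hhd]
  · intro hstable X f
    have h1 : ξ (𝟙_ C) M M (λ_ M).hom ≫ (τ M).hom = ζ M (𝟙_ C) M (ρ_ M).hom := by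
      rw [← hstable, Equiv.apply_symm_apply]
    apply (ζ X (𝟙_ C) M).injective
    rw [htr, Equiv.apply_symm_apply, ← leftUnitor_naturality, ξ_nat_mid,
      Category.assoc, τ_nat, ← Category.assoc, h1, ← ζ_nat_mid, rightUnitor_naturality]
end

section
/- Let (U, A) be a left bialgebroid. The monoidal category U-Mod of left U-modules is left closed: for left U-modules N, M, the k-module hom^ℓ(N,M) := Hom_U(N ⊗_A U, M), equipped with the left U-action (v · f)(n ⊗ u) := f(n ⊗ uv), is a left U-module, and there is a natural isomorphism ζ: Hom_U(N ⊗_A P, M) ≅ Hom_U(P, hom^ℓ(N,M)), given by ζ(f)(p)(n ⊗ u) = f(n ⊗ up), exhibiting hom^ℓ(N,-) as right adjoint to N ⊗_A -. -/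
open scoped TensorProduct
open TensorProduct

noncomputable section

variable (k A U : Type) [CommRing k] [Ring A] [Ring U] [Algebra k A] [Algebra k U]

/-- The `k`-submodule of `N ⊗[k] M` of relations defining the `A`-module tensor
product `N ⊗_A M` of two left `U`-modules, where the right `A`-action on `N` is
`n ◃ a := t a • n` and the left `A`-action on `M` is `a ▹ m := s a • m`
(the `A`-bimodule structure `a ▹ m ◃ b = s a • t b • m` induced by the forgetful
functor along the source and target maps `s`, `t`). -/
def relA (s t : A → U) (N M : Type) [AddCommGroup N] [Module k N] [Module U N]
    [AddCommGroup M] [Module k M] [Module U M] : Submodule k (N ⊗[k] M) :=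
  Submodule.span k
    {z | ∃ (a : A) (n : N) (m : M), z = (t a • n) ⊗ₜ[k] m - n ⊗ₜ[k] (s a • m)}

/-- Relations defining `U ⊗_{Aᵒᵖ} U` (the source of the Hopf–Galois map `α_ℓ`):
`(u * t a) ⊗ v - u ⊗ (t a * v)`. -/
def relOp (t : A → U) : Submodule k (U ⊗[k] U) :=
  Submodule.span k
    {z | ∃ (a : A) (u v : U), z = (u * t a) ⊗ₜ[k] v - u ⊗ₜ[k] (t a * v)}

/-- Relations defining the triple tensor product `U ⊗_A U ⊗_A U` inside
`U ⊗[k] (U ⊗[k] U)`. -/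
def rel3 (s t : A → U) : Submodule k (U ⊗[k] (U ⊗[k] U)) :=
  Submodule.span k
    ({z | ∃ (a : A) (u v w : U),
        z = (t a * u) ⊗ₜ[k] (v ⊗ₜ[k] w) - u ⊗ₜ[k] ((s a * v) ⊗ₜ[k] w)} ∪
     {z | ∃ (a : A) (u v w : U),
        z = u ⊗ₜ[k] ((t a * v) ⊗ₜ[k] w) - u ⊗ₜ[k] (v ⊗ₜ[k] (s a * w))})

/-- A left bialgebroid `(U, A)` over a commutative ring `k`, presented with a
set-theoretic lift `comul : U → U ⊗[k] U` of the coproduct `Δ : U → U ⊗_A U`;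
all structure equations involving `Δ` are stated modulo the relation submodule
`relA`, resp. on arbitrary finite decompositions into elementary tensors
(= Sweedler components). -/
structure LeftBialgebroid : Type 1 where
  /-- the source map, an algebra map `A → U` -/
  s : A →ₐ[k] U
  /-- the target map, an algebra anti-homomorphism `A → U` -/
  t : A →ₗ[k] U
  t_one : t 1 = 1
  t_mul : ∀ a b : A, t (a * b) = t b * t a
  st_comm : ∀ a b : A, s a * t b = t b * s a
  /-- the counit -/
  counit : U →ₗ[k] A
  /-- a lift of the coproduct -/
  comul : U → U ⊗[k] U
  comul_add : ∀ u v : U, comul (u + v) - comul u - comul v ∈ relA k A U s t U U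
  comul_ksmul : ∀ (c : k) (u : U), comul (c • u) - c • comul u ∈ relA k A U s t U U
  comul_one : comul 1 - (1 : U) ⊗ₜ[k] (1 : U) ∈ relA k A U s t U U
  comul_s : ∀ a : A, comul (s a) - (s a) ⊗ₜ[k] (1 : U) ∈ relA k A U s t U U
  comul_t : ∀ a : A, comul (t a) - (1 : U) ⊗ₜ[k] (t a) ∈ relA k A U s t U U
  comul_mul : ∀ u v : U, comul (u * v) - comul u * comul v ∈ relA k A U s t U U
  /-- The coproduct takes values in the Takeuchi product `U ×_A U`. -/
  takeuchi : ∀ (u : U) (a : A),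
    TensorProduct.map (LinearMap.mulRight k (t a)) LinearMap.id (comul u) -
      TensorProduct.map LinearMap.id (LinearMap.mulRight k (s a)) (comul u)
      ∈ relA k A U s t U U
  counit_one : counit 1 = 1
  counit_s : ∀ a : A, counit (s a) = a
  counit_t : ∀ a : A, counit (t a) = a
  counit_sl : ∀ (a : A) (u : U), counit (s a * u) = a * counit u
  counit_tl : ∀ (a : A) (u : U), counit (t a * u) = counit u * a
  /-- left counitality: `s (ε u₍₁₎) u₍₂₎ = u` -/
  counit_comul_left : ∀ (u : U) {κ : Type} [Fintype κ] (x y : κ → U),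
    comul u - ∑ j, x j ⊗ₜ[k] y j ∈ relA k A U s t U U →
      ∑ j, s (counit (x j)) * y j = u
  /-- right counitality: `t (ε u₍₂₎) u₍₁₎ = u` -/
  counit_comul_right : ∀ (u : U) {κ : Type} [Fintype κ] (x y : κ → U),
    comul u - ∑ j, x j ⊗ₜ[k] y j ∈ relA k A U s t U U →
      ∑ j, t (counit (y j)) * x j = u
  /-- coassociativity: `u₍₁₎₍₁₎ ⊗ u₍₁₎₍₂₎ ⊗ u₍₂₎ = u₍₁₎ ⊗ u₍₂₎₍₁₎ ⊗ u₍₂₎₍₂₎` -/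
  coassoc : ∀ (u : U) {κ : Type} [Fintype κ] (x y : κ → U)
      {κ' : Type} [Fintype κ'] (x₁ y₁ : κ → κ' → U) (x₂ y₂ : κ → κ' → U),
    comul u - ∑ j, x j ⊗ₜ[k] y j ∈ relA k A U s t U U →
    (∀ j, comul (x j) - ∑ l, x₁ j l ⊗ₜ[k] y₁ j l ∈ relA k A U s t U U) →
    (∀ j, comul (y j) - ∑ l, x₂ j l ⊗ₜ[k] y₂ j l ∈ relA k A U s t U U) →
    (∑ j, ∑ l, x₁ j l ⊗ₜ[k] (y₁ j l ⊗ₜ[k] y j)) -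
      (∑ j, ∑ l, x j ⊗ₜ[k] (x₂ j l ⊗ₜ[k] y₂ j l)) ∈ rel3 k A U s t

/-- A left Hopf structure on a left bialgebroid: the translation map
`u ↦ u₊ ⊗ u₋` (a set-theoretic lift of `α_ℓ⁻¹(u ⊗ 1)`), linear modulo the
`⊗_{Aᵒᵖ}`-relations and satisfying the two identities characterizing the
inverse of the Hopf-Galois map `α_ℓ : u ⊗ v ↦ u₍₁₎ ⊗ u₍₂₎v`, namely
`u₊₍₁₎ ⊗ u₊₍₂₎ u₋ = u ⊗ 1` in `U ⊗_A U` and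
`u₍₁₎₊ ⊗ u₍₁₎₋ u₍₂₎ = u ⊗ 1` in `U ⊗_{Aᵒᵖ} U`; this data is equivalent to the
bijectivity of `α_ℓ`, i.e. to `(U, A)` being a left Hopf algebroid. -/
structure LeftHopf (lb : LeftBialgebroid k A U) : Type where
  pinv : U → U ⊗[k] U
  pinv_add : ∀ u v : U, pinv (u + v) - pinv u - pinv v ∈ relOp k A U lb.t
  pinv_ksmul : ∀ (c : k) (u : U), pinv (c • u) - c • pinv u ∈ relOp k A U lb.t
  sch2 : ∀ (u : U) {κ : Type} [Fintype κ] (x y : κ → U)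
      {κ' : Type} [Fintype κ'] (p q : κ → κ' → U),
    pinv u - ∑ j, x j ⊗ₜ[k] y j ∈ relOp k A U lb.t →
    (∀ j, lb.comul (x j) - ∑ l, p j l ⊗ₜ[k] q j l ∈ relA k A U lb.s lb.t U U) →
    (∑ j, ∑ l, p j l ⊗ₜ[k] (q j l * y j)) - u ⊗ₜ[k] (1 : U)
      ∈ relA k A U lb.s lb.t U U
  sch3 : ∀ (u : U) {κ : Type} [Fintype κ] (x y : κ → U)
      {κ' : Type} [Fintype κ'] (p q : κ → κ' → U),
    lb.comul u - ∑ j, x j ⊗ₜ[k] y j ∈ relA k A U lb.s lb.t U U →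
    (∀ j, pinv (x j) - ∑ l, p j l ⊗ₜ[k] q j l ∈ relOp k A U lb.t) →
    (∑ j, ∑ l, p j l ⊗ₜ[k] (q j l * y j)) - u ⊗ₜ[k] (1 : U)
      ∈ relOp k A U lb.t

variable {k A U}

/-- the `k`-linear map `u ↦ u • n` for a fixed element of a `U`-module -/
def actOn (N : Type) [AddCommGroup N] [Module k N] [Module U N]
    [IsScalarTower k U N] (n : N) : U →ₗ[k] N where
  toFun u := u • n
  map_add' u v := add_smul u v n
  map_smul' c u := smul_assoc c u n

/-- A `k`-linear map `g : N →ₗ[k] M` between left `U`-modules is right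
`A`-linear (for the right `A`-actions `n ◃ a = t a • n`). -/
def RightALin (lb : LeftBialgebroid k A U) {N M : Type}
    [AddCommGroup N] [Module k N] [Module U N]
    [AddCommGroup M] [Module k M] [Module U M]
    (g : N →ₗ[k] M) : Prop :=
  ∀ (a : A) (n : N), g (lb.t a • n) = lb.t a • g n

/-- `f` descends to `N ⊗_A P`. -/
def IsBalanced (lb : LeftBialgebroid k A U) {N P M : Type}
    [AddCommGroup N] [Module k N] [Module U N]
    [AddCommGroup P] [Module k P] [Module U P]
    [AddCommGroup M] [Module k M]
    (f : N ⊗[k] P →ₗ[k] M) : Prop :=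
  relA k A U lb.s lb.t N P ≤ LinearMap.ker f

/-- `f : N ⊗[k] P →ₗ[k] M` is equivariant for the diagonal (comultiplication)
`U`-action `u • (n ⊗ p) = u₍₁₎ n ⊗ u₍₂₎ p` on `N ⊗_A P` and the given `U`-action
on `M`. -/
def DiagEquiv (lb : LeftBialgebroid k A U) {N P M : Type}
    [AddCommGroup N] [Module k N] [Module U N]
    [AddCommGroup P] [Module k P] [Module U P]
    [AddCommGroup M] [Module k M] [Module U M]
    (f : N ⊗[k] P →ₗ[k] M) : Prop :=
  ∀ (u : U) (n : N) (p : P) {κ : Type} [Fintype κ] (x y : κ → U),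
    lb.comul u - ∑ j, x j ⊗ₜ[k] y j ∈ relA k A U lb.s lb.t U U →
      f (∑ j, (x j • n) ⊗ₜ[k] (y j • p)) = u • f (n ⊗ₜ[k] p)

namespace Stmt5

/-- The left `U`-action \eqref{umact} on `hom^ℓ(N,M) = Hom_U(N ⊗_A U, M)`:
`(v · f)(n ⊗ u) := f (n ⊗ uv)`. -/
def actL {N M : Type} [AddCommGroup N] [Module k N] [Module U N]
    [AddCommGroup M] [Module k M]
    (v : U) (f : N ⊗[k] U →ₗ[k] M) : N ⊗[k] U →ₗ[k] M :=
  f ∘ₗ TensorProduct.map LinearMap.id (LinearMap.mulRight k v)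

end Stmt5

section Aux

variable {lb : LeftBialgebroid k A U} {N P M : Type}
  [AddCommGroup N] [Module k N] [Module U N]
  [AddCommGroup P] [Module k P] [Module U P]
  [AddCommGroup M] [Module k M]

theorem isBalanced_gen {f : N ⊗[k] P →ₗ[k] M} (hb : IsBalanced lb f)
    (a : A) (n : N) (p : P) :
    f ((lb.t a • n) ⊗ₜ[k] p) = f (n ⊗ₜ[k] (lb.s a • p)) := by
  have h : (lb.t a • n) ⊗ₜ[k] p - n ⊗ₜ[k] (lb.s a • p) ∈ relA k A U lb.s lb.t N P :=
    Submodule.subset_span ⟨a, n, p, rfl⟩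
  have h2 := hb h
  rw [LinearMap.mem_ker, map_sub, sub_eq_zero] at h2
  exact h2

theorem isBalanced_of_gen {f : N ⊗[k] P →ₗ[k] M}
    (h : ∀ (a : A) (n : N) (p : P),
      f ((lb.t a • n) ⊗ₜ[k] p) = f (n ⊗ₜ[k] (lb.s a • p))) :
    IsBalanced lb f := by
  rw [IsBalanced, relA, Submodule.span_le]
  rintro z ⟨a, n, p, rfl⟩
  simp [LinearMap.mem_ker, h a n p]

theorem actL_apply (v : U) (f : N ⊗[k] U →ₗ[k] M) (n : N) (u : U) :
    Stmt5.actL v f (n ⊗ₜ[k] u) = f (n ⊗ₜ[k] (u * v)) := rfl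

theorem zeta_apply [IsScalarTower k U P] (f : N ⊗[k] P →ₗ[k] M) (p : P) (n : N) (u : U) :
    (f ∘ₗ TensorProduct.map LinearMap.id (actOn P p : U →ₗ[k] P)) (n ⊗ₜ[k] u) =
      f (n ⊗ₜ[k] (u • p)) := rfl

end Aux

open Stmt5 in
/-- for a left bialgebroid `(U, A)`, the monoidal category of left
`U`-modules is left closed, with left internal Hom
`hom^ℓ(N,M) = Hom_U(N ⊗_A U, M)` (presented here as the balanced,
`U`-equivariant `k`-linear maps on `N ⊗[k] U`), left `U`-action
`(v·f)(n ⊗ u) = f(n ⊗ uv)`, and Hom-tensor adjunction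
`ζ : Hom_U(N ⊗_A P, M) ≅ Hom_U(P, hom^ℓ(N,M))`, `ζ(f)(p)(n ⊗ u) = f(n ⊗ up)`. -/
theorem stmt_5 (lb : LeftBialgebroid k A U)
    (N M P P' M' : Type)
    [AddCommGroup N] [Module k N] [Module U N] [IsScalarTower k U N]
    [AddCommGroup M] [Module k M] [Module U M] [IsScalarTower k U M]
    [AddCommGroup P] [Module k P] [Module U P] [IsScalarTower k U P]
    [AddCommGroup P'] [Module k P'] [Module U P'] [IsScalarTower k U P']
    [AddCommGroup M'] [Module k M'] [Module U M'] [IsScalarTower k U M'] :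
    -- (1) the action \eqref{umact} preserves Hom_U(N ⊗_A U, M)
    (∀ f : N ⊗[k] U →ₗ[k] M, IsBalanced lb f → DiagEquiv lb f →
      ∀ v : U, IsBalanced lb (actL v f) ∧ DiagEquiv lb (actL v f)) ∧
    -- (2) it is a left U-module structure (compatible with the k-structure)
    (∀ f : N ⊗[k] U →ₗ[k] M, actL (1 : U) f = f) ∧
    (∀ (v w : U) (f : N ⊗[k] U →ₗ[k] M), actL (v * w) f = actL v (actL w f)) ∧
    (∀ (v w : U) (f : N ⊗[k] U →ₗ[k] M), actL (v + w) f = actL v f + actL w f) ∧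
    (∀ (v : U) (f g : N ⊗[k] U →ₗ[k] M), actL v (f + g) = actL v f + actL v g) ∧
    (∀ (c : k) (v : U) (f : N ⊗[k] U →ₗ[k] M), actL (c • v) f = c • actL v f) ∧
    (∀ (c : k) (v : U) (f : N ⊗[k] U →ₗ[k] M), actL v (c • f) = c • actL v f) ∧
    -- (3) the adjunction ζ : Hom_U(N ⊗_A P, M) ≅ Hom_U(P, hom^ℓ(N, M)),
    --     ζ(f)(p) := f ∘ (id_N ⊗ (· • p)), i.e. ζ(f)(p)(n ⊗ u) = f(n ⊗ up):
    --     it is well defined, U-linear in p, bijective, and natural in P and M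
    (∀ (f : N ⊗[k] P →ₗ[k] M) (p : P) (n : N) (u : U),
      (f ∘ₗ TensorProduct.map LinearMap.id (actOn P p : U →ₗ[k] P)) (n ⊗ₜ[k] u) =
        f (n ⊗ₜ[k] (u • p))) ∧
    (∀ f : N ⊗[k] P →ₗ[k] M, IsBalanced lb f → DiagEquiv lb f → ∀ p : P,
      IsBalanced lb (f ∘ₗ TensorProduct.map LinearMap.id (actOn P p : U →ₗ[k] P)) ∧
      DiagEquiv lb (f ∘ₗ TensorProduct.map LinearMap.id (actOn P p : U →ₗ[k] P))) ∧
    (∀ (f : N ⊗[k] P →ₗ[k] M) (p p' : P),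
      f ∘ₗ TensorProduct.map LinearMap.id (actOn P (p + p') : U →ₗ[k] P) =
        f ∘ₗ TensorProduct.map LinearMap.id (actOn P p : U →ₗ[k] P) +
          f ∘ₗ TensorProduct.map LinearMap.id (actOn P p' : U →ₗ[k] P)) ∧
    (∀ (f : N ⊗[k] P →ₗ[k] M) (c : k) (p : P),
      f ∘ₗ TensorProduct.map LinearMap.id (actOn P (c • p) : U →ₗ[k] P) =
        c • (f ∘ₗ TensorProduct.map LinearMap.id (actOn P p : U →ₗ[k] P))) ∧
    (∀ (f : N ⊗[k] P →ₗ[k] M) (u : U) (p : P),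
      f ∘ₗ TensorProduct.map LinearMap.id (actOn P (u • p) : U →ₗ[k] P) =
        actL u (f ∘ₗ TensorProduct.map LinearMap.id (actOn P p : U →ₗ[k] P))) ∧
    -- injectivity
    (∀ f g : N ⊗[k] P →ₗ[k] M, IsBalanced lb f → DiagEquiv lb f →
      IsBalanced lb g → DiagEquiv lb g →
      (∀ p : P, f ∘ₗ TensorProduct.map LinearMap.id (actOn P p : U →ₗ[k] P) =
        g ∘ₗ TensorProduct.map LinearMap.id (actOn P p : U →ₗ[k] P)) → f = g) ∧
    -- surjectivity
    (∀ G : P → (N ⊗[k] U →ₗ[k] M),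
      (∀ p, IsBalanced lb (G p) ∧ DiagEquiv lb (G p)) →
      (∀ p p', G (p + p') = G p + G p') →
      (∀ (c : k) (p : P), G (c • p) = c • G p) →
      (∀ (u : U) (p : P), G (u • p) = actL u (G p)) →
      ∃ f : N ⊗[k] P →ₗ[k] M, IsBalanced lb f ∧ DiagEquiv lb f ∧
        ∀ p, f ∘ₗ TensorProduct.map LinearMap.id (actOn P p : U →ₗ[k] P) = G p) ∧
    -- naturality in P
    (∀ (σ : P' →ₗ[k] P), (∀ (u : U) (p' : P'), σ (u • p') = u • σ p') →
      ∀ (f : N ⊗[k] P →ₗ[k] M) (p' : P'),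
        (f ∘ₗ TensorProduct.map (LinearMap.id : N →ₗ[k] N) σ) ∘ₗ
            TensorProduct.map (LinearMap.id : N →ₗ[k] N) (actOn P' p' : U →ₗ[k] P') =
          f ∘ₗ TensorProduct.map (LinearMap.id : N →ₗ[k] N) (actOn P (σ p') : U →ₗ[k] P)) ∧
    -- naturality in M
    (∀ (ω : M →ₗ[k] M'), (∀ (u : U) (m : M), ω (u • m) = u • ω m) →
      ∀ (f : N ⊗[k] P →ₗ[k] M) (p : P),
        ∀ z : N ⊗[k] U,
          ((ω ∘ₗ f) ∘ₗ TensorProduct.map (LinearMap.id : N →ₗ[k] N) (actOn P p : U →ₗ[k] P)) z =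
            ω ((f ∘ₗ TensorProduct.map (LinearMap.id : N →ₗ[k] N) (actOn P p : U →ₗ[k] P)) z)) := by
  refine ⟨?_, ?_, ?_, ?_, ?_, ?_, ?_, ?_, ?_, ?_, ?_, ?_, ?_, ?_, ?_, ?_⟩
  · -- (1) the action preserves Hom_U(N ⊗_A U, M)
    intro f hb hd v
    constructor
    · apply isBalanced_of_gen
      intro a n u
      rw [actL_apply, actL_apply, isBalanced_gen hb a n (u * v)]
      simp [smul_eq_mul, mul_assoc]
    · intro u n p κ _ x y hxy
      have h := hd u n (p * v) x y hxy
      simp only [Stmt5.actL, LinearMap.comp_apply, map_sum, TensorProduct.map_tmul,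
        LinearMap.id_coe, id_eq, LinearMap.mulRight_apply] at *
      simpa [smul_eq_mul, mul_assoc] using h
  · intro f; apply TensorProduct.ext'; intro n u; simp [actL_apply]
  · intro v w f; apply TensorProduct.ext'; intro n u
    simp [actL_apply, mul_assoc]
  · intro v w f; apply TensorProduct.ext'; intro n u
    simp [actL_apply, mul_add, tmul_add]
  · intro v f g; apply TensorProduct.ext'; intro n u
    simp [actL_apply]
  · intro c v f; apply TensorProduct.ext'; intro n u
    simp [actL_apply, mul_smul_comm, tmul_smul]
  · intro c v f; apply TensorProduct.ext'; intro n u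
    simp [actL_apply]
  · -- ζ formula
    intro f p n u; rfl
  · -- ζ(f)(p) ∈ Hom_U(N ⊗_A U, M)
    intro f hb hd p
    constructor
    · apply isBalanced_of_gen
      intro a n u
      rw [zeta_apply, zeta_apply, isBalanced_gen hb a n (u • p)]
      rw [smul_eq_mul, mul_smul]
    · intro u n q κ _ x y hxy
      have h := hd u n (q • p) x y hxy
      simp only [LinearMap.comp_apply, map_sum, TensorProduct.map_tmul,
        LinearMap.id_coe, id_eq] at *
      have : ∀ j, (actOn P p : U →ₗ[k] P) (y j • q) = y j • (q • p) := by
        intro j; show (y j • q) • p = _; rw [smul_eq_mul, mul_smul]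
      simp only [this]
      have hq : (actOn P p : U →ₗ[k] P) q = q • p := rfl
      rw [hq]; exact h
  · intro f p p'; apply TensorProduct.ext'; intro n u
    have : (actOn P (p + p') : U →ₗ[k] P) u = u • p + u • p' := smul_add u p p'
    simp only [LinearMap.comp_apply, LinearMap.add_apply, TensorProduct.map_tmul,
      LinearMap.id_coe, id_eq, this, tmul_add, map_add]
    rfl
  · intro f c p; apply TensorProduct.ext'; intro n u
    have : (actOn P (c • p) : U →ₗ[k] P) u = c • (u • p) := smul_comm u c p
    simp only [LinearMap.comp_apply, LinearMap.smul_apply, TensorProduct.map_tmul,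
      LinearMap.id_coe, id_eq, this, tmul_smul, map_smul]
    rfl
  · intro f u p; apply TensorProduct.ext'; intro n v
    rw [zeta_apply, actL_apply, zeta_apply, mul_smul]
  · -- injectivity
    intro f g _ _ _ _ h
    apply TensorProduct.ext'; intro n p
    have h2 := congrArg (fun φ : N ⊗[k] U →ₗ[k] M => φ (n ⊗ₜ[k] (1 : U))) (h p)
    simpa only [zeta_apply, one_smul] using h2
  · -- surjectivity
    intro G hG hGadd hGk hGu
    obtain ⟨f, hf⟩ : ∃ f : N ⊗[k] P →ₗ[k] M,
        ∀ (n : N) (p : P), f (n ⊗ₜ[k] p) = G p (n ⊗ₜ[k] (1 : U)) := by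
      refine ⟨TensorProduct.lift
        { toFun := fun n =>
            { toFun := fun p => G p (n ⊗ₜ[k] (1 : U))
              map_add' := fun p p' => by
                show G (p + p') (n ⊗ₜ[k] (1 : U)) = _
                rw [hGadd]; rfl
              map_smul' := fun c p => by
                show G (c • p) (n ⊗ₜ[k] (1 : U)) = _
                rw [hGk]; rfl }
          map_add' := fun n n' => by
            ext p
            show G p ((n + n') ⊗ₜ[k] (1 : U)) = _
            rw [add_tmul, map_add]; rfl
          map_smul' := fun c n => by
            ext p
            show G p ((c • n) ⊗ₜ[k] (1 : U)) = _
            rw [← smul_tmul', map_smul]; rfl }, fun n p => rfl⟩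
    refine ⟨f, ?_, ?_, ?_⟩
    · apply isBalanced_of_gen
      intro a n p
      rw [hf, hf, hGu, actL_apply, isBalanced_gen (hG p).1 a n (1 : U), one_mul,
        smul_eq_mul, mul_one]
    · intro u n p κ _ x y hxy
      have h := (hG p).2 u n (1 : U) x y hxy
      simp only [smul_eq_mul, mul_one] at h
      rw [map_sum, hf]
      calc (∑ j, f ((x j • n) ⊗ₜ[k] (y j • p)))
          = ∑ j, G p ((x j • n) ⊗ₜ[k] (y j)) := by
            refine Finset.sum_congr rfl fun j _ => ?_
            rw [hf, hGu, actL_apply, one_mul]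
        _ = G p (∑ j, (x j • n) ⊗ₜ[k] (y j)) := (map_sum _ _ _).symm
        _ = u • G p (n ⊗ₜ[k] (1 : U)) := h
    · intro p
      apply TensorProduct.ext'; intro n u
      rw [zeta_apply, hf, hGu, actL_apply, one_mul]
  · -- naturality in P
    intro σ hσ f p'
    apply TensorProduct.ext'; intro n u
    simp only [LinearMap.comp_apply, TensorProduct.map_tmul, LinearMap.id_coe, id_eq]
    have h1 : (actOn P' p' : U →ₗ[k] P') u = u • p' := rfl
    have h2 : (actOn P (σ p') : U →ₗ[k] P) u = u • σ p' := rfl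
    rw [h1, h2, hσ]
  · -- naturality in M
    intro ω hω f p z
    rfl

end
end

section
/- Let (U, A) be a left bialgebroid which is left Hopf. Then the monoidal category U-Mod of left U-modules is right closed: for left U-modules N, M, the k-module hom^r(N,M) := Hom_{A^op}(N,M) of right A-linear maps, equipped with the left U-action (u · g)(n) := u₊ g(u₋ n), is a left U-module, and the Hom-tensor adjunction ξ: Hom_U(P ⊗_A N, M) ≅ Hom_U(P, hom^r(N,M)), ξ(g)(p) = g(p ⊗ -), is a natural isomorphism exhibiting hom^r(N,-) as right adjoint to - ⊗_A N. Consequently U-Mod is biclosed monoidal. -/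
open scoped TensorProduct
open TensorProduct

noncomputable section

variable (k A U : Type) [CommRing k] [Ring A] [Ring U] [Algebra k A] [Algebra k U]

variable {k A U}

/-!
The translation map `u ↦ u₊ ⊗ u₋` is determined, modulo the relations of `U ⊗_{Aᵒᵖ} U`, by
`α_ℓ(u₊ ⊗ u₋) = u ⊗ 1`: the map `x ⊗ y ↦ x₊ ⊗ x₋ y` kills the relations of `U ⊗_A U` and is a
left inverse of `α_ℓ`, so `α_ℓ` is injective. Hence the identities `1₊ ⊗ 1₋ = 1 ⊗ 1`,
`t(a)₊ ⊗ t(a)₋ = 1 ⊗ s(a)`, `u₊ ⊗ u₋ t(a) = t(a) u₊ ⊗ u₋` and `(uv)₊ ⊗ (uv)₋ = u₊v₊ ⊗ v₋u₋` can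
be checked after applying `α_ℓ`, where they follow from the bialgebroid axioms; they make
`(u · g)(n) = u₊ g(u₋ n)` a well-defined action on right `A`-linear maps.

Currying `f ↦ (p ↦ f(p ⊗ -))` is `U`-linear because `u₊₍₁₎ ⊗ u₊₍₂₎ u₋ = u ⊗ 1`, and its inverse
`G ↦ (p ⊗ n ↦ G p n)` is compatible with the diagonal action because `u₍₁₎₊ ⊗ u₍₁₎₋ u₍₂₎ = u ⊗ 1`.
The left internal hom `Hom_U(N ⊗_A U, M)` needs no Hopf structure: there the inverse of currying
evaluates at `n ⊗ 1`.
-/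

theorem TensorProduct.exists_common_sum_tmul_eq {M M' : Type} [AddCommGroup M] [Module k M]
    [AddCommGroup M'] [Module k M'] {κ : Type} [Fintype κ] (z : κ → M ⊗[k] M') :
    ∃ (ι : Type) (_ : Fintype ι) (x : κ → ι → M) (y : κ → ι → M'),
      ∀ j, z j = ∑ i, x j i ⊗ₜ[k] y j i := by
  classical
  choose S hS using fun j => TensorProduct.exists_finset (z j)
  refine ⟨Finset.univ.biUnion S, inferInstance,
    fun j i => if i.1 ∈ S j then i.1.1 else 0, fun _ i => i.1.2, fun j => ?_⟩
  rw [hS j, Finset.sum_coe_sort (Finset.univ.biUnion S)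
    (fun i => (if i ∈ S j then i.1 else 0) ⊗ₜ[k] i.2)]
  simp only [ite_tmul]
  rw [Finset.sum_ite_mem, Finset.inter_eq_right.mpr
    (Finset.subset_biUnion_of_mem S (Finset.mem_univ j))]

section Relations

omit [Ring A] [Algebra k A]

variable {N N' M M' : Type}
  [AddCommGroup N] [Module k N] [Module U N] [AddCommGroup N'] [Module k N'] [Module U N']
  [AddCommGroup M] [Module k M] [Module U M] [AddCommGroup M'] [Module k M'] [Module U M']

omit [Algebra k U] in
theorem tmul_sub_tmul_mem_relA (s t : A → U) (a : A) (n : N) (m : M) :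
    (t a • n) ⊗ₜ[k] m - n ⊗ₜ[k] (s a • m) ∈ relA k A U s t N M :=
  Submodule.subset_span ⟨a, n, m, rfl⟩

theorem mul_tmul_sub_tmul_mul_mem_relOp (t : A → U) (a : A) (u v : U) :
    (u * t a) ⊗ₜ[k] v - u ⊗ₜ[k] (t a * v) ∈ relOp k A U t :=
  Submodule.subset_span ⟨a, u, v, rfl⟩

omit [Algebra k U] in
theorem relA_le_comap_map (s t : A → U) (φ : N →ₗ[k] N') (ψ : M →ₗ[k] M')
    (hφ : ∀ (u : U) (n : N), φ (u • n) = u • φ n) (hψ : ∀ (u : U) (m : M), ψ (u • m) = u • ψ m) :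
    relA k A U s t N M ≤ (relA k A U s t N' M').comap (TensorProduct.map φ ψ) := by
  refine Submodule.span_le.2 ?_
  rintro _ ⟨a, n, m, rfl⟩
  simpa [hφ, hψ] using tmul_sub_tmul_mem_relA s t a (φ n) (ψ m)

theorem mul_mem_relA (s t : A → U) {z : U ⊗[k] U} (hz : z ∈ relA k A U s t U U) (w : U ⊗[k] U) :
    z * w ∈ relA k A U s t U U := by
  induction w using TensorProduct.induction_on with
  | zero => simp
  | tmul x y =>
    rw [← LinearMap.mulRight_apply (R := k), LinearMap.mulRight_tmul]
    exact relA_le_comap_map s t _ _ (fun u v => mul_assoc u v x) (fun u v => mul_assoc u v y) hz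
  | add w w' hw hw' => rw [mul_add]; exact add_mem hw hw'

theorem mul_one_tmul_mem_relOp (t : A → U) {z : U ⊗[k] U} (hz : z ∈ relOp k A U t) (y : U) :
    z * ((1 : U) ⊗ₜ[k] y) ∈ relOp k A U t := by
  suffices relOp k A U t ≤ (relOp k A U t).comap (LinearMap.mulRight k ((1 : U) ⊗ₜ[k] y)) from
    this hz
  refine Submodule.span_le.2 ?_
  rintro _ ⟨a, u, v, rfl⟩
  simpa [sub_mul, mul_assoc] using mul_tmul_sub_tmul_mul_mem_relOp t a u (v * y)

end Relations

namespace LeftBialgebroid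

variable (lb : LeftBialgebroid k A U)

theorem relA_le_comap_mulLeft_one_tmul_t (a : A) :
    relA k A U lb.s lb.t U U ≤ (relA k A U lb.s lb.t U U).comap
      (LinearMap.mulLeft k ((1 : U) ⊗ₜ[k] lb.t a)) := by
  refine Submodule.span_le.2 ?_
  rintro _ ⟨b, x, y, rfl⟩
  simpa [mul_sub, ← mul_assoc, lb.st_comm] using
    tmul_sub_tmul_mem_relA (k := k) lb.s lb.t b x (lb.t a * y)

theorem comul_mul_mem_relA (u : U) {z : U ⊗[k] U} (hz : z ∈ relA k A U lb.s lb.t U U) :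
    lb.comul u * z ∈ relA k A U lb.s lb.t U U := by
  suffices relA k A U lb.s lb.t U U ≤ (relA k A U lb.s lb.t U U).comap
      (LinearMap.mulLeft k (lb.comul u)) from this hz
  refine Submodule.span_le.2 ?_
  rintro _ ⟨a, x, y, rfl⟩
  have takeuchi : lb.comul u * (lb.t a ⊗ₜ[k] (1 : U) - (1 : U) ⊗ₜ[k] lb.s a)
      ∈ relA k A U lb.s lb.t U U := by
    have h := lb.takeuchi u a
    rwa [← LinearMap.mulRight_one (R := k), ← LinearMap.mulRight_tmul, ← LinearMap.mulRight_tmul,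
      LinearMap.mulRight_apply, LinearMap.mulRight_apply, ← mul_sub] at h
  have hgen : (lb.t a • x) ⊗ₜ[k] y - x ⊗ₜ[k] (lb.s a • y) =
      (lb.t a ⊗ₜ[k] (1 : U) - (1 : U) ⊗ₜ[k] lb.s a) * (x ⊗ₜ[k] y) := by
    simp [sub_mul]
  rw [SetLike.mem_coe, Submodule.mem_comap, LinearMap.mulLeft_apply, hgen, ← mul_assoc]
  exact mul_mem_relA lb.s lb.t takeuchi (x ⊗ₜ[k] y)

theorem comul_t_mul_sub_mem_relA (a : A) (x : U) :
    lb.comul (lb.t a * x) - ((1 : U) ⊗ₜ[k] lb.t a) * lb.comul x ∈ relA k A U lb.s lb.t U U := by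
  have h := add_mem (lb.comul_mul (lb.t a) x)
    (mul_mem_relA lb.s lb.t (lb.comul_t a) (lb.comul x))
  rwa [sub_mul, sub_add_sub_cancel] at h

end LeftBialgebroid

section GaloisLift

variable (R : Submodule k (U ⊗[k] U)) (F : U → U ⊗[k] U)
  (hadd : ∀ u v : U, F (u + v) - F u - F v ∈ R) (hsmul : ∀ (c : k) (u : U), F (c • u) - c • F u ∈ R)
  (hR : ∀ z ∈ R, ∀ y : U, z * ((1 : U) ⊗ₜ[k] y) ∈ R)

/-- For `F = Δ` this is the Hopf–Galois map `α_ℓ`; for `F = (·)₊ ⊗ (·)₋` it is the map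
`x ⊗ y ↦ x₊ ⊗ x₋ y` into `U ⊗_{Aᵒᵖ} U`. -/
def galoisLift : U ⊗[k] U →ₗ[k] U ⊗[k] U ⧸ R :=
  TensorProduct.lift <| LinearMap.mk₂ k (fun x y => R.mkQ (F x * ((1 : U) ⊗ₜ[k] y)))
    (fun x x' y => by
      rw [← map_add, Submodule.mkQ_apply, Submodule.mkQ_apply, Submodule.Quotient.eq, ← add_mul,
        ← sub_mul, ← sub_sub]
      exact hR _ (hadd x x') y)
    (fun c x y => by
      rw [← map_smul, Submodule.mkQ_apply, Submodule.mkQ_apply, Submodule.Quotient.eq,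
        ← smul_mul_assoc, ← sub_mul]
      exact hR _ (hsmul c x) y)
    (fun x y y' => by rw [tmul_add, mul_add, map_add])
    (fun c x y => by rw [tmul_smul, mul_smul_comm, map_smul])

theorem galoisLift_tmul (x y : U) :
    galoisLift R F hadd hsmul hR (x ⊗ₜ[k] y) = R.mkQ (F x * ((1 : U) ⊗ₜ[k] y)) :=
  rfl

theorem galoisLift_sum_tmul {κ : Type} [Fintype κ] (x y : κ → U) :
    galoisLift R F hadd hsmul hR (∑ j, x j ⊗ₜ[k] y j) =
      R.mkQ (∑ j, F (x j) * ((1 : U) ⊗ₜ[k] y j)) := by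
  simp [map_sum, galoisLift_tmul]

/-- The axioms `sch2` and `sch3` of `LeftHopf` both have the shape of `hGF`. -/
theorem galoisLift_mul_one_tmul (R' : Submodule k (U ⊗[k] U)) (G : U → U ⊗[k] U)
    (hGF : ∀ (u : U) {κ : Type} [Fintype κ] (x y : κ → U)
      {κ' : Type} [Fintype κ'] (p q : κ → κ' → U),
      G u - ∑ j, x j ⊗ₜ[k] y j ∈ R' → (∀ j, F (x j) - ∑ l, p j l ⊗ₜ[k] q j l ∈ R) →
        (∑ j, ∑ l, p j l ⊗ₜ[k] (q j l * y j)) - u ⊗ₜ[k] (1 : U) ∈ R)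
    {u : U} {V : U ⊗[k] U} (hV : G u - V ∈ R') (y : U) :
    galoisLift R F hadd hsmul hR (V * ((1 : U) ⊗ₜ[k] y)) = R.mkQ (u ⊗ₜ[k] y) := by
  obtain ⟨κ, x, y', rfl⟩ := V.exists_sum_tmul_eq
  obtain ⟨κ', _, p, q, hpq⟩ := TensorProduct.exists_common_sum_tmul_eq fun j => F (x j)
  have h := hR _ (hGF u x y' p q hV fun j => by rw [hpq j, sub_self]; exact R.zero_mem) y
  have e : galoisLift R F hadd hsmul hR ((∑ j, x j ⊗ₜ[k] y' j) * ((1 : U) ⊗ₜ[k] y)) =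
      R.mkQ ((∑ j, ∑ l, p j l ⊗ₜ[k] (q j l * y' j)) * ((1 : U) ⊗ₜ[k] y)) := by
    simp [Finset.sum_mul, map_sum, galoisLift_tmul, hpq, mul_assoc]
  rw [e, Submodule.mkQ_apply, Submodule.mkQ_apply, Submodule.Quotient.eq]
  simpa [sub_mul] using h

end GaloisLift

namespace LeftBialgebroid

variable (lb : LeftBialgebroid k A U)

def galoisMap : U ⊗[k] U →ₗ[k] U ⊗[k] U ⧸ relA k A U lb.s lb.t U U :=
  galoisLift _ lb.comul lb.comul_add lb.comul_ksmul fun _ hz _ => mul_mem_relA _ _ hz _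

theorem galoisMap_tmul (x y : U) :
    lb.galoisMap (x ⊗ₜ[k] y) = (relA k A U lb.s lb.t U U).mkQ (lb.comul x * ((1 : U) ⊗ₜ[k] y)) :=
  rfl

theorem galoisMap_t_tmul_one_mul (a : A) (z : U ⊗[k] U) :
    lb.galoisMap ((lb.t a ⊗ₜ[k] (1 : U)) * z) =
      (relA k A U lb.s lb.t U U).mapQ (relA k A U lb.s lb.t U U)
        (LinearMap.mulLeft k ((1 : U) ⊗ₜ[k] lb.t a)) (lb.relA_le_comap_mulLeft_one_tmul_t a)
        (lb.galoisMap z) := by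
  induction z using TensorProduct.induction_on with
  | zero => simp
  | tmul x y =>
    rw [Algebra.TensorProduct.tmul_mul_tmul, one_mul, galoisMap_tmul, galoisMap_tmul,
      Submodule.mkQ_apply, Submodule.mkQ_apply, Submodule.mapQ_apply, Submodule.Quotient.eq,
      LinearMap.mulLeft_apply, ← mul_assoc, ← sub_mul]
    exact mul_mem_relA _ _ (lb.comul_t_mul_sub_mem_relA a x) _
  | add z z' hz hz' => rw [mul_add, map_add, map_add, hz, hz', map_add]

end LeftBialgebroid

namespace LeftHopf

variable {lb : LeftBialgebroid k A U} (lh : LeftHopf k A U lb)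

def translationMap : U ⊗[k] U →ₗ[k] U ⊗[k] U ⧸ relOp k A U lb.t :=
  galoisLift _ lh.pinv lh.pinv_add lh.pinv_ksmul fun _ hz _ => mul_one_tmul_mem_relOp _ hz _

theorem galoisMap_mul_one_tmul {u : U} {V : U ⊗[k] U} (hV : lh.pinv u - V ∈ relOp k A U lb.t)
    (y : U) :
    lb.galoisMap (V * ((1 : U) ⊗ₜ[k] y)) = (relA k A U lb.s lb.t U U).mkQ (u ⊗ₜ[k] y) :=
  galoisLift_mul_one_tmul _ _ _ _ _ _ _ lh.sch2 hV y

theorem translationMap_mul_one_tmul {u : U} {W : U ⊗[k] U}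
    (hW : lb.comul u - W ∈ relA k A U lb.s lb.t U U) (y : U) :
    lh.translationMap (W * ((1 : U) ⊗ₜ[k] y)) = (relOp k A U lb.t).mkQ (u ⊗ₜ[k] y) :=
  galoisLift_mul_one_tmul _ _ _ _ _ _ _ lh.sch3 hW y

theorem galoisMap_eq {u : U} {V : U ⊗[k] U} (hV : lh.pinv u - V ∈ relOp k A U lb.t) :
    lb.galoisMap V = (relA k A U lb.s lb.t U U).mkQ (u ⊗ₜ[k] (1 : U)) := by
  simpa [← Algebra.TensorProduct.one_def] using lh.galoisMap_mul_one_tmul hV 1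

theorem translationMap_eq {u : U} {W : U ⊗[k] U}
    (hW : lb.comul u - W ∈ relA k A U lb.s lb.t U U) :
    lh.translationMap W = (relOp k A U lb.t).mkQ (u ⊗ₜ[k] (1 : U)) := by
  simpa [← Algebra.TensorProduct.one_def] using lh.translationMap_mul_one_tmul hW 1

-- `translationMap` sends every representative of `Δ 1` to `1 ⊗ 1`, so it kills `relA`.
theorem translationMap_eq_zero_of_mem_relA {r : U ⊗[k] U} (hr : r ∈ relA k A U lb.s lb.t U U) :
    lh.translationMap r = 0 := by
  have h₀ := lh.translationMap_eq (u := 1) (W := lb.comul 1) (by simp)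
  have h₁ := lh.translationMap_eq (u := 1) (W := lb.comul 1 - r) (by rwa [sub_sub_cancel])
  rwa [map_sub, h₀, sub_eq_self] at h₁

include lh in
theorem mem_relOp_of_galoisMap_eq_zero {z : U ⊗[k] U} (hz : lb.galoisMap z = 0) :
    z ∈ relOp k A U lb.t := by
  let β := (relA k A U lb.s lb.t U U).liftQ lh.translationMap
    fun _ hr => lh.translationMap_eq_zero_of_mem_relA hr
  have hβ : β ∘ₗ lb.galoisMap = (relOp k A U lb.t).mkQ := TensorProduct.ext' fun x y => by
    rw [LinearMap.comp_apply, LeftBialgebroid.galoisMap_tmul]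
    exact lh.translationMap_mul_one_tmul (u := x) (W := lb.comul x) (by simp) y
  rw [← Submodule.Quotient.mk_eq_zero, ← Submodule.mkQ_apply, ← hβ, LinearMap.comp_apply, hz,
    map_zero]

theorem pinv_sub_mem_relOp {u : U} {z : U ⊗[k] U}
    (hz : lb.galoisMap z = (relA k A U lb.s lb.t U U).mkQ (u ⊗ₜ[k] (1 : U))) :
    lh.pinv u - z ∈ relOp k A U lb.t :=
  mem_relOp_of_galoisMap_eq_zero lh <| by
    rw [map_sub, lh.galoisMap_eq (u := u) (V := lh.pinv u) (by simp), hz, sub_self]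

theorem sum_comul_mul_smodEq {u : U} {κ : Type} [Fintype κ] {x y : κ → U}
    (hx : lh.pinv u - ∑ j, x j ⊗ₜ[k] y j ∈ relOp k A U lb.t) :
    ∑ j, lb.comul (x j) * ((1 : U) ⊗ₜ[k] y j) ≡ u ⊗ₜ[k] (1 : U)
      [SMOD relA k A U lb.s lb.t U U] :=
  (galoisLift_sum_tmul _ _ _ _ _ x y).symm.trans (lh.galoisMap_eq hx)

theorem sum_pinv_mul_smodEq {u : U} {κ : Type} [Fintype κ] {x y : κ → U}
    (hx : lb.comul u - ∑ j, x j ⊗ₜ[k] y j ∈ relA k A U lb.s lb.t U U) :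
    ∑ j, lh.pinv (x j) * ((1 : U) ⊗ₜ[k] y j) ≡ u ⊗ₜ[k] (1 : U) [SMOD relOp k A U lb.t] :=
  (galoisLift_sum_tmul _ _ _ _ _ x y).symm.trans (lh.translationMap_eq hx)

theorem pinv_one : lh.pinv 1 - (1 : U) ⊗ₜ[k] (1 : U) ∈ relOp k A U lb.t := by
  refine lh.pinv_sub_mem_relOp ?_
  rw [LeftBialgebroid.galoisMap_tmul, ← Algebra.TensorProduct.one_def, mul_one,
    Submodule.mkQ_apply, Submodule.mkQ_apply, Submodule.Quotient.eq]
  exact lb.comul_one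

theorem pinv_t (a : A) : lh.pinv (lb.t a) - (1 : U) ⊗ₜ[k] lb.s a ∈ relOp k A U lb.t := by
  refine lh.pinv_sub_mem_relOp ?_
  rw [LeftBialgebroid.galoisMap_tmul, Submodule.mkQ_apply, Submodule.mkQ_apply,
    Submodule.Quotient.eq]
  have h := sub_mem (mul_mem_relA _ _ lb.comul_one ((1 : U) ⊗ₜ[k] lb.s a))
    (tmul_sub_tmul_mem_relA (k := k) lb.s lb.t a (1 : U) (1 : U))
  simpa [sub_mul] using h

theorem pinv_mul_one_tmul_t (a : A) (u : U) :
    lh.pinv u * ((1 : U) ⊗ₜ[k] lb.t a) - (lb.t a ⊗ₜ[k] (1 : U)) * lh.pinv u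
      ∈ relOp k A U lb.t := by
  refine mem_relOp_of_galoisMap_eq_zero lh ?_
  have hu : lh.pinv u - lh.pinv u ∈ relOp k A U lb.t := by simp
  rw [map_sub, lh.galoisMap_mul_one_tmul hu, lb.galoisMap_t_tmul_one_mul, lh.galoisMap_eq hu,
    Submodule.mkQ_apply, Submodule.mkQ_apply, Submodule.mapQ_apply, LinearMap.mulLeft_apply,
    Algebra.TensorProduct.tmul_mul_tmul, one_mul, mul_one, sub_self]

theorem pinv_mul {u v : U} {κ κ' : Type} [Fintype κ] [Fintype κ'] {x y : κ → U} {p q : κ' → U}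
    (hx : lh.pinv u - ∑ j, x j ⊗ₜ[k] y j ∈ relOp k A U lb.t)
    (hp : lh.pinv v - ∑ l, p l ⊗ₜ[k] q l ∈ relOp k A U lb.t) :
    lh.pinv (u * v) - ∑ i : κ × κ', (x i.1 * p i.2) ⊗ₜ[k] (q i.2 * y i.1)
      ∈ relOp k A U lb.t := by
  refine lh.pinv_sub_mem_relOp ?_
  rw [Fintype.sum_prod_type]
  have e : lb.galoisMap (∑ j, ∑ l, (x j * p l) ⊗ₜ[k] (q l * y j)) =
      (relA k A U lb.s lb.t U U).mkQ
        (∑ j, ∑ l, lb.comul (x j * p l) * ((1 : U) ⊗ₜ[k] (q l * y j))) := by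
    simp [map_sum, LeftBialgebroid.galoisMap_tmul]
  rw [e]
  change _ ≡ _ [SMOD relA k A U lb.s lb.t U U]
  calc ∑ j, ∑ l, lb.comul (x j * p l) * ((1 : U) ⊗ₜ[k] (q l * y j))
      ≡ ∑ j, lb.comul (x j) * (∑ l, lb.comul (p l) * ((1 : U) ⊗ₜ[k] q l)) *
          ((1 : U) ⊗ₜ[k] y j) [SMOD relA k A U lb.s lb.t U U] := by
        simp only [Finset.mul_sum, Finset.sum_mul]
        refine SModEq.sum fun j _ => SModEq.sum fun l _ => SModEq.sub_mem.mpr ?_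
        have h := mul_mem_relA _ _ (lb.comul_mul (x j) (p l)) ((1 : U) ⊗ₜ[k] (q l * y j))
        simpa [sub_mul, mul_assoc] using h
    _ ≡ ∑ j, lb.comul (x j) * (v ⊗ₜ[k] (1 : U)) * ((1 : U) ⊗ₜ[k] y j)
          [SMOD relA k A U lb.s lb.t U U] := by
        refine SModEq.sum fun j _ => SModEq.sub_mem.mpr ?_
        rw [← sub_mul, ← mul_sub]
        exact mul_mem_relA _ _
          (lb.comul_mul_mem_relA _ (SModEq.sub_mem.mp (lh.sum_comul_mul_smodEq hp))) _
    _ = (∑ j, lb.comul (x j) * ((1 : U) ⊗ₜ[k] y j)) * (v ⊗ₜ[k] (1 : U)) := by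
        simp [Finset.sum_mul, mul_assoc]
    _ ≡ (u ⊗ₜ[k] (1 : U)) * (v ⊗ₜ[k] (1 : U)) [SMOD relA k A U lb.s lb.t U U] := by
        rw [SModEq.sub_mem, ← sub_mul]
        exact mul_mem_relA _ _ (SModEq.sub_mem.mp (lh.sum_comul_mul_smodEq hx)) _
    _ = (u * v) ⊗ₜ[k] (1 : U) := by simp

end LeftHopf

section HomAction

variable {N M : Type} [AddCommGroup N] [Module k N] [Module U N] [IsScalarTower k U N]
  [AddCommGroup M] [Module k M] [Module U M] [IsScalarTower k U M]

def sandwich : U ⊗[k] U →ₗ[k] Module.End k (N →ₗ[k] M) :=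
  TensorProduct.lift <| LinearMap.mk₂ k
    (fun x y => LinearMap.llcomp k N M M (Algebra.lsmul k k M x) ∘ₗ
      LinearMap.lcomp k M (Algebra.lsmul k k N y))
    (fun x x' y => by ext; simp)
    (fun c x y => by ext; simp)
    (fun x y y' => by ext; simp)
    (fun c x y => by ext; simp)

theorem sandwich_tmul_apply (x y : U) (g : N →ₗ[k] M) (n : N) :
    sandwich (x ⊗ₜ[k] y) g n = x • g (y • n) :=
  rfl

theorem sandwich_sum_tmul_apply {κ : Type} [Fintype κ] (x y : κ → U) (g : N →ₗ[k] M) (n : N) :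
    sandwich (∑ j, x j ⊗ₜ[k] y j) g n = ∑ j, x j • g (y j • n) := by
  simp [map_sum, sandwich_tmul_apply]

theorem sandwich_mul_one_tmul_apply (z : U ⊗[k] U) (y : U) (g : N →ₗ[k] M) (n : N) :
    sandwich (z * ((1 : U) ⊗ₜ[k] y)) g n = sandwich z g (y • n) := by
  induction z using TensorProduct.induction_on with
  | zero => simp
  | tmul x y' => simp [sandwich_tmul_apply, mul_smul]
  | add z z' hz hz' => simp [add_mul, hz, hz']

theorem sandwich_tmul_one_mul_apply (w : U) (z : U ⊗[k] U) (g : N →ₗ[k] M) (n : N) :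
    sandwich ((w ⊗ₜ[k] (1 : U)) * z) g n = w • sandwich z g n := by
  induction z using TensorProduct.induction_on with
  | zero => simp
  | tmul x y => simp [sandwich_tmul_apply, mul_smul]
  | add z z' hz hz' => simp [mul_add, hz, hz']

theorem sandwich_eq_zero_of_mem_relOp (lb : LeftBialgebroid k A U) {g : N →ₗ[k] M}
    (hg : RightALin lb g) {z : U ⊗[k] U} (hz : z ∈ relOp k A U lb.t) : sandwich z g = 0 := by
  suffices relOp k A U lb.t ≤ LinearMap.ker ((sandwich (N := N) (M := M)).flip g) from this hz
  refine Submodule.span_le.2 ?_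
  rintro _ ⟨a, u, v, rfl⟩
  ext n
  simp [sandwich_tmul_apply, mul_smul, hg a]

theorem sandwich_congr (lb : LeftBialgebroid k A U) {g : N →ₗ[k] M} (hg : RightALin lb g)
    {z z' : U ⊗[k] U} (h : z - z' ∈ relOp k A U lb.t) : sandwich z g = sandwich z' g := by
  rw [← sub_eq_zero, ← LinearMap.sub_apply, ← map_sub, sandwich_eq_zero_of_mem_relOp lb hg h]

namespace LeftHopf

variable {lb : LeftBialgebroid k A U} (lh : LeftHopf k A U lb)

def homAct (u : U) : Module.End k (N →ₗ[k] M) :=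
  sandwich (lh.pinv u)

theorem homAct_apply {g : N →ₗ[k] M} (hg : RightALin lb g) {u : U} {κ : Type} [Fintype κ]
    {x y : κ → U} (h : lh.pinv u - ∑ j, x j ⊗ₜ[k] y j ∈ relOp k A U lb.t) (n : N) :
    lh.homAct u g n = ∑ j, x j • g (y j • n) := by
  rw [homAct, sandwich_congr lb hg h, sandwich_sum_tmul_apply]

theorem rightALin_homAct {g : N →ₗ[k] M} (hg : RightALin lb g) (u : U) :
    RightALin lb (lh.homAct u g) := by
  intro a n
  rw [homAct, ← sandwich_mul_one_tmul_apply, sandwich_congr lb hg (lh.pinv_mul_one_tmul_t a u),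
    sandwich_tmul_one_mul_apply]

theorem homAct_one {g : N →ₗ[k] M} (hg : RightALin lb g) : lh.homAct 1 g = g := by
  ext n
  rw [homAct, sandwich_congr lb hg lh.pinv_one, sandwich_tmul_apply, one_smul, one_smul]

theorem homAct_mul {g : N →ₗ[k] M} (hg : RightALin lb g) (u v : U) :
    lh.homAct (u * v) g = lh.homAct u (lh.homAct v g) := by
  obtain ⟨κ, x, y, hxy⟩ := (lh.pinv u).exists_sum_tmul_eq
  obtain ⟨κ', p, q, hpq⟩ := (lh.pinv v).exists_sum_tmul_eq
  have hx : lh.pinv u - ∑ j, x j ⊗ₜ[k] y j ∈ relOp k A U lb.t := by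
    rw [← hxy, sub_self]; exact zero_mem _
  have hp : lh.pinv v - ∑ l, p l ⊗ₜ[k] q l ∈ relOp k A U lb.t := by
    rw [← hpq, sub_self]; exact zero_mem _
  ext n
  rw [lh.homAct_apply hg (lh.pinv_mul hx hp), lh.homAct_apply (lh.rightALin_homAct hg v) hx,
    Fintype.sum_prod_type]
  simp only [lh.homAct_apply hg hp, Finset.smul_sum, mul_smul]

theorem homAct_add_left {g : N →ₗ[k] M} (hg : RightALin lb g) (u v : U) :
    lh.homAct (u + v) g = lh.homAct u g + lh.homAct v g := by
  have h := sandwich_eq_zero_of_mem_relOp lb hg (lh.pinv_add u v)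
  rwa [map_sub, map_sub, LinearMap.sub_apply, LinearMap.sub_apply, sub_sub, sub_eq_zero] at h

theorem homAct_smul_left {g : N →ₗ[k] M} (hg : RightALin lb g) (c : k) (u : U) :
    lh.homAct (c • u) g = c • lh.homAct u g := by
  rw [homAct, sandwich_congr lb hg (lh.pinv_ksmul c u), map_smul, LinearMap.smul_apply]
  rfl

end LeftHopf

end HomAction

section Adjunction

variable {P N M : Type} [AddCommGroup P] [Module k P] [Module U P]
  [AddCommGroup N] [Module k N] [Module U N] [AddCommGroup M] [Module k M]

theorem actOn_smul [IsScalarTower k U P] (p : P) (u x : U) :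
    actOn (k := k) P p (u • x) = u • actOn (k := k) P p x :=
  mul_smul u x p

variable {lb : LeftBialgebroid k A U}

theorem IsBalanced.comp_map {N' P' : Type} [AddCommGroup N'] [Module k N'] [Module U N']
    [AddCommGroup P'] [Module k P'] [Module U P'] {f : N ⊗[k] P →ₗ[k] M} (hf : IsBalanced lb f)
    (φ : N' →ₗ[k] N) (ψ : P' →ₗ[k] P) (hφ : ∀ (u : U) n, φ (u • n) = u • φ n)
    (hψ : ∀ (u : U) p, ψ (u • p) = u • ψ p) : IsBalanced lb (f ∘ₗ TensorProduct.map φ ψ) :=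
  fun _ hz => hf (relA_le_comap_map _ _ φ ψ hφ hψ hz)

theorem DiagEquiv.comp_map [Module U M] {N' P' : Type} [AddCommGroup N'] [Module k N']
    [Module U N'] [AddCommGroup P'] [Module k P'] [Module U P'] {f : N ⊗[k] P →ₗ[k] M}
    (hf : DiagEquiv lb f) (φ : N' →ₗ[k] N) (ψ : P' →ₗ[k] P) (hφ : ∀ (u : U) n, φ (u • n) = u • φ n)
    (hψ : ∀ (u : U) p, ψ (u • p) = u • ψ p) : DiagEquiv lb (f ∘ₗ TensorProduct.map φ ψ) := by
  intro u n p κ _ x y h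
  simpa [map_sum, hφ, hψ] using hf u (φ n) (ψ p) x y h

theorem DiagEquiv.rightALin_comp_mk [Module U M] {f : P ⊗[k] N →ₗ[k] M} (hf : DiagEquiv lb f)
    (p : P) :
    RightALin lb (f ∘ₗ TensorProduct.mk k P N p) := by
  intro a n
  simpa using hf (lb.t a) p n (fun _ : Fin 1 => 1) (fun _ => lb.t a) (by simpa using lb.comul_t a)

theorem DiagEquiv.apply_map_actOn_comul_mul [IsScalarTower k U P] [IsScalarTower k U N]
    [Module U M] {f : P ⊗[k] N →ₗ[k] M} (hf : DiagEquiv lb f) (p : P) (n : N) (x y : U) :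
    f (TensorProduct.map (actOn P p) (actOn N n) (lb.comul x * ((1 : U) ⊗ₜ[k] y))) =
      x • f (p ⊗ₜ[k] (y • n)) := by
  obtain ⟨κ, a, b, hab⟩ := (lb.comul x).exists_sum_tmul_eq
  rw [← hf x p (y • n) a b (by simp [hab]), hab]
  simp [Finset.sum_mul, map_sum, actOn, mul_smul]

namespace LeftHopf

variable (lh : LeftHopf k A U lb) [IsScalarTower k U N] [Module U M] [IsScalarTower k U M]

theorem comp_mk_smul [IsScalarTower k U P] {f : P ⊗[k] N →ₗ[k] M} (hbal : IsBalanced lb f)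
    (hf : DiagEquiv lb f) (u : U) (p : P) :
    f ∘ₗ TensorProduct.mk k P N (u • p) = lh.homAct u (f ∘ₗ TensorProduct.mk k P N p) := by
  ext n
  obtain ⟨κ, x, y, hxy⟩ := (lh.pinv u).exists_sum_tmul_eq
  have hx : lh.pinv u - ∑ j, x j ⊗ₜ[k] y j ∈ relOp k A U lb.t := by
    rw [← hxy, sub_self]; exact zero_mem _
  have hsum := hbal.comp_map (actOn P p) (actOn N n) (actOn_smul p) (actOn_smul n)
    (SModEq.sub_mem.mp (lh.sum_comul_mul_smodEq hx))
  rw [LinearMap.mem_ker, LinearMap.comp_apply, map_sub, map_sub, sub_eq_zero] at hsum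
  simp only [map_sum, hf.apply_map_actOn_comul_mul] at hsum
  rw [lh.homAct_apply (hf.rightALin_comp_mk p) hx]
  simp only [LinearMap.comp_apply, TensorProduct.mk_apply]
  rw [hsum]
  simp [actOn]

theorem isBalanced_lift {G : P →ₗ[k] N →ₗ[k] M} (hG : ∀ p, RightALin lb (G p))
    (hGu : ∀ (u : U) (p : P), G (u • p) = lh.homAct u (G p)) :
    IsBalanced lb (TensorProduct.lift G) := by
  refine Submodule.span_le.2 ?_
  rintro _ ⟨a, p, n, rfl⟩
  rw [SetLike.mem_coe, LinearMap.mem_ker, map_sub, TensorProduct.lift.tmul,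
    TensorProduct.lift.tmul, hGu, homAct, sandwich_congr lb (hG p) (lh.pinv_t a),
    sandwich_tmul_apply, one_smul, sub_self]

theorem diagEquiv_lift {G : P →ₗ[k] N →ₗ[k] M} (hG : ∀ p, RightALin lb (G p))
    (hGu : ∀ (u : U) (p : P), G (u • p) = lh.homAct u (G p)) :
    DiagEquiv lb (TensorProduct.lift G) := by
  intro u p n κ _ x y h
  have hsum := sandwich_congr lb (hG p) (SModEq.sub_mem.mp (lh.sum_pinv_mul_smodEq h))
  have hsum_n := LinearMap.congr_fun hsum n
  simp only [map_sum, LinearMap.sum_apply, sandwich_mul_one_tmul_apply,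
    sandwich_tmul_apply, one_smul] at hsum_n
  simpa [map_sum, hGu, homAct] using hsum_n

theorem exists_comp_mk_eq (G : P → (N →ₗ[k] M)) (hG : ∀ p, RightALin lb (G p))
    (hadd : ∀ p p', G (p + p') = G p + G p') (hsmul : ∀ (c : k) (p : P), G (c • p) = c • G p)
    (hGu : ∀ (u : U) (p : P), G (u • p) = lh.homAct u (G p)) :
    ∃ f : P ⊗[k] N →ₗ[k] M, IsBalanced lb f ∧ DiagEquiv lb f ∧
      ∀ p, f ∘ₗ TensorProduct.mk k P N p = G p :=
  let Gₗ : P →ₗ[k] N →ₗ[k] M := ⟨⟨G, hadd⟩, hsmul⟩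
  ⟨TensorProduct.lift Gₗ, lh.isBalanced_lift (G := Gₗ) hG hGu,
    lh.diagEquiv_lift (G := Gₗ) hG hGu, fun _ => rfl⟩

end LeftHopf

end Adjunction

section LeftClosed

variable {P N M : Type} [AddCommGroup P] [Module k P] [AddCommGroup N] [Module k N]
  [AddCommGroup M] [Module k M]

theorem eq_of_comp_map_id_actOn_eq [Module U P] [IsScalarTower k U P] {f g : N ⊗[k] P →ₗ[k] M}
    (h : ∀ p : P, f ∘ₗ TensorProduct.map LinearMap.id (actOn P p : U →ₗ[k] P) =
      g ∘ₗ TensorProduct.map LinearMap.id (actOn P p : U →ₗ[k] P)) : f = g :=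
  TensorProduct.ext' fun n p => by simpa [actOn] using LinearMap.congr_fun (h p) (n ⊗ₜ[k] 1)

/-- The inverse of the currying `f ↦ (p ↦ f ∘ (id ⊗ (· • p)))`. -/
def uncurryLeft (G : P →ₗ[k] N ⊗[k] U →ₗ[k] M) : N ⊗[k] P →ₗ[k] M :=
  TensorProduct.lift (G.flip ∘ₗ (TensorProduct.mk k N U).flip 1)

theorem uncurryLeft_tmul (G : P →ₗ[k] N ⊗[k] U →ₗ[k] M) (n : N) (p : P) :
    uncurryLeft G (n ⊗ₜ[k] p) = G p (n ⊗ₜ[k] 1) :=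
  rfl

section

variable [Module U P] {lb : LeftBialgebroid k A U} {G : P →ₗ[k] N ⊗[k] U →ₗ[k] M}
  (hGu : ∀ (u : U) (p : P),
    G (u • p) = G p ∘ₗ TensorProduct.map LinearMap.id (LinearMap.mulRight k u))
include hGu

theorem uncurryLeft_comp_map_id_actOn [IsScalarTower k U P] (p : P) :
    uncurryLeft G ∘ₗ TensorProduct.map LinearMap.id (actOn P p : U →ₗ[k] P) = G p :=
  TensorProduct.ext' fun n w => by simp [uncurryLeft_tmul, actOn, hGu]

theorem isBalanced_uncurryLeft [Module U N] (hG : ∀ p, IsBalanced lb (G p)) :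
    IsBalanced lb (uncurryLeft G) := by
  refine Submodule.span_le.2 ?_
  rintro _ ⟨a, n, p, rfl⟩
  have h := hG p (tmul_sub_tmul_mem_relA lb.s lb.t a n (1 : U))
  rw [LinearMap.mem_ker, map_sub, sub_eq_zero] at h
  rw [SetLike.mem_coe, LinearMap.mem_ker, map_sub, uncurryLeft_tmul, uncurryLeft_tmul, hGu]
  simpa [sub_eq_zero] using h

theorem diagEquiv_uncurryLeft [Module U N] [Module U M] (hG : ∀ p, DiagEquiv lb (G p)) :
    DiagEquiv lb (uncurryLeft G) := by
  intro u n p κ _ x y h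
  simpa [uncurryLeft_tmul, map_sum, hGu] using hG p u n 1 x y h

end

theorem exists_comp_map_id_actOn_eq [Module U P] [IsScalarTower k U P] [Module U N] [Module U M]
    {lb : LeftBialgebroid k A U} (G : P → (N ⊗[k] U →ₗ[k] M))
    (hG : ∀ p, IsBalanced lb (G p) ∧ DiagEquiv lb (G p))
    (hadd : ∀ p p', G (p + p') = G p + G p') (hsmul : ∀ (c : k) (p : P), G (c • p) = c • G p)
    (hGu : ∀ (u : U) (p : P),
      G (u • p) = G p ∘ₗ TensorProduct.map LinearMap.id (LinearMap.mulRight k u)) :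
    ∃ f : N ⊗[k] P →ₗ[k] M, IsBalanced lb f ∧ DiagEquiv lb f ∧
      ∀ p, f ∘ₗ TensorProduct.map LinearMap.id (actOn P p : U →ₗ[k] P) = G p :=
  let Gₗ : P →ₗ[k] N ⊗[k] U →ₗ[k] M := ⟨⟨G, hadd⟩, hsmul⟩
  ⟨uncurryLeft Gₗ, isBalanced_uncurryLeft hGu fun p => (hG p).1,
    diagEquiv_uncurryLeft hGu fun p => (hG p).2, uncurryLeft_comp_map_id_actOn hGu⟩

end LeftClosed

theorem stmt_6_general (lb : LeftBialgebroid k A U) (lh : LeftHopf k A U lb)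
    (N M P P' M' : Type)
    [AddCommGroup N] [Module k N] [Module U N] [IsScalarTower k U N]
    [AddCommGroup M] [Module k M] [Module U M] [IsScalarTower k U M]
    [AddCommGroup P] [Module k P] [Module U P] [IsScalarTower k U P]
    [AddCommGroup P'] [Module k P'] [Module U P']
    [AddCommGroup M'] [Module k M'] [Module U M'] :
    -- there is a left U-action `pm` on Hom_{Aᵒᵖ}(N, M) — `(u · g)(n) = u₊ g(u₋ n)`
    ∃ pm : U → (N →ₗ[k] M) → (N →ₗ[k] M),
      -- characterizing formula, via arbitrary finite decompositions of u₊ ⊗ u₋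
      (∀ (u : U) (g : N →ₗ[k] M), RightALin lb g →
        ∀ {κ : Type} [Fintype κ] (x y : κ → U),
          lh.pinv u - ∑ j, x j ⊗ₜ[k] y j ∈ relOp k A U lb.t →
            ∀ n : N, pm u g n = ∑ j, x j • g (y j • n)) ∧
      -- it preserves right A-linearity
      (∀ (u : U) (g : N →ₗ[k] M), RightALin lb g → RightALin lb (pm u g)) ∧
      -- and is a (k-compatible) left U-module structure on Hom_{Aᵒᵖ}(N, M)
      (∀ g : N →ₗ[k] M, RightALin lb g → pm (1 : U) g = g) ∧
      (∀ (u v : U) (g : N →ₗ[k] M), RightALin lb g →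
        pm (u * v) g = pm u (pm v g)) ∧
      (∀ (u v : U) (g : N →ₗ[k] M), RightALin lb g →
        pm (u + v) g = pm u g + pm v g) ∧
      (∀ (u : U) (g g' : N →ₗ[k] M), RightALin lb g → RightALin lb g' →
        pm u (g + g') = pm u g + pm u g') ∧
      (∀ (c : k) (u : U) (g : N →ₗ[k] M), RightALin lb g →
        pm (c • u) g = c • pm u g) ∧
      (∀ (c : k) (u : U) (g : N →ₗ[k] M), RightALin lb g →
        pm u (c • g) = c • pm u g) ∧
      -- the Hom-tensor adjunction ξ : Hom_U(P ⊗_A N, M) ≅ Hom_U(P, hom^r(N,M)),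
      -- ξ(f)(p) := f(p ⊗ -), is well defined, U-linear, bijective and natural:
      -- well-definedness
      (∀ f : P ⊗[k] N →ₗ[k] M, IsBalanced lb f → DiagEquiv lb f →
        ∀ p : P, RightALin lb (f ∘ₗ TensorProduct.mk k P N p)) ∧
      -- additivity, k-linearity and U-equivariance of p ↦ ξ(f)(p)
      (∀ (f : P ⊗[k] N →ₗ[k] M) (p p' : P),
        f ∘ₗ TensorProduct.mk k P N (p + p') =
          f ∘ₗ TensorProduct.mk k P N p + f ∘ₗ TensorProduct.mk k P N p') ∧
      (∀ (f : P ⊗[k] N →ₗ[k] M) (c : k) (p : P),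
        f ∘ₗ TensorProduct.mk k P N (c • p) = c • (f ∘ₗ TensorProduct.mk k P N p)) ∧
      (∀ f : P ⊗[k] N →ₗ[k] M, IsBalanced lb f → DiagEquiv lb f →
        ∀ (u : U) (p : P),
          f ∘ₗ TensorProduct.mk k P N (u • p) = pm u (f ∘ₗ TensorProduct.mk k P N p)) ∧
      -- injectivity
      (∀ f g : P ⊗[k] N →ₗ[k] M, IsBalanced lb f → DiagEquiv lb f →
        IsBalanced lb g → DiagEquiv lb g →
        (∀ p : P, f ∘ₗ TensorProduct.mk k P N p = g ∘ₗ TensorProduct.mk k P N p) →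
        f = g) ∧
      -- surjectivity
      (∀ G : P → (N →ₗ[k] M),
        (∀ p, RightALin lb (G p)) →
        (∀ p p', G (p + p') = G p + G p') →
        (∀ (c : k) (p : P), G (c • p) = c • G p) →
        (∀ (u : U) (p : P), G (u • p) = pm u (G p)) →
        ∃ f : P ⊗[k] N →ₗ[k] M, IsBalanced lb f ∧ DiagEquiv lb f ∧
          ∀ p, f ∘ₗ TensorProduct.mk k P N p = G p) ∧
      -- naturality in P
      (∀ (σ : P' →ₗ[k] P), (∀ (u : U) (p' : P'), σ (u • p') = u • σ p') →
        ∀ (f : P ⊗[k] N →ₗ[k] M) (p' : P'),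
          (f ∘ₗ TensorProduct.map σ (LinearMap.id : N →ₗ[k] N)) ∘ₗ
              TensorProduct.mk k P' N p' =
            f ∘ₗ TensorProduct.mk k P N (σ p')) ∧
      -- naturality in M
      (∀ (ω : M →ₗ[k] M'), (∀ (u : U) (m : M), ω (u • m) = u • ω m) →
        ∀ (f : P ⊗[k] N →ₗ[k] M) (p : P),
          (ω ∘ₗ f) ∘ₗ TensorProduct.mk k P N p = ω ∘ₗ (f ∘ₗ TensorProduct.mk k P N p)) ∧
      -- consequently, together with the left internal Homs of Statement 5
      -- (the adjunction ζ : Hom_U(N ⊗_A P, M) ≅ Hom_U(P, Hom_U(N ⊗_A U, M))),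
      -- the category of left U-modules is biclosed monoidal:
      (∀ f : N ⊗[k] P →ₗ[k] M, IsBalanced lb f → DiagEquiv lb f → ∀ p : P,
        IsBalanced lb (f ∘ₗ TensorProduct.map (LinearMap.id : N →ₗ[k] N)
          (actOn P p : U →ₗ[k] P)) ∧
        DiagEquiv lb (f ∘ₗ TensorProduct.map (LinearMap.id : N →ₗ[k] N)
          (actOn P p : U →ₗ[k] P))) ∧
      (∀ f g : N ⊗[k] P →ₗ[k] M, IsBalanced lb f → DiagEquiv lb f →
        IsBalanced lb g → DiagEquiv lb g →
        (∀ p : P, f ∘ₗ TensorProduct.map (LinearMap.id : N →ₗ[k] N)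
            (actOn P p : U →ₗ[k] P) =
          g ∘ₗ TensorProduct.map (LinearMap.id : N →ₗ[k] N)
            (actOn P p : U →ₗ[k] P)) → f = g) ∧
      (∀ G : P → (N ⊗[k] U →ₗ[k] M),
        (∀ p, IsBalanced lb (G p) ∧ DiagEquiv lb (G p)) →
        (∀ p p', G (p + p') = G p + G p') →
        (∀ (c : k) (p : P), G (c • p) = c • G p) →
        (∀ (u : U) (p : P), G (u • p) =
          (G p) ∘ₗ TensorProduct.map (LinearMap.id : N →ₗ[k] N)
            (LinearMap.mulRight k u)) →
        ∃ f : N ⊗[k] P →ₗ[k] M, IsBalanced lb f ∧ DiagEquiv lb f ∧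
          ∀ p, f ∘ₗ TensorProduct.map (LinearMap.id : N →ₗ[k] N)
            (actOn P p : U →ₗ[k] P) = G p) :=
  ⟨fun u g => lh.homAct u g,
    fun _ _ hg _ _ _ _ h => lh.homAct_apply hg h,
    fun u _ hg => lh.rightALin_homAct hg u,
    fun _ hg => lh.homAct_one hg,
    fun u v _ hg => lh.homAct_mul hg u v,
    fun u v _ hg => lh.homAct_add_left hg u v,
    fun u g g' _ _ => map_add (lh.homAct u) g g',
    fun c u _ hg => lh.homAct_smul_left hg c u,
    fun c u g _ => map_smul (lh.homAct u) c g,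
    fun _ _ hf p => hf.rightALin_comp_mk p,
    fun _ _ _ => by rw [map_add, LinearMap.comp_add],
    fun _ _ _ => by rw [map_smul, LinearMap.comp_smul],
    fun _ hbal hf u p => lh.comp_mk_smul hbal hf u p,
    fun _ _ _ _ _ _ h => TensorProduct.ext (LinearMap.ext h),
    lh.exists_comp_mk_eq,
    fun _ _ _ _ => rfl,
    fun _ _ _ _ => rfl,
    fun _ hbal hf p => ⟨hbal.comp_map _ _ (fun _ _ => rfl) (actOn_smul p),
      hf.comp_map _ _ (fun _ _ => rfl) (actOn_smul p)⟩,
    fun _ _ _ _ _ _ h => eq_of_comp_map_id_actOn_eq h,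
    exists_comp_map_id_actOn_eq⟩

/-- for a left bialgebroid `(U, A)` which is left Hopf, the monoidal
category of left `U`-modules is right closed: `hom^r(N,M) = Hom_{Aᵒᵖ}(N,M)` (the
right `A`-linear maps) carries a left `U`-action `(u · g)(n) = u₊ g(u₋ n)`, and
the Hom-tensor adjunction `ξ : Hom_U(P ⊗_A N, M) ≅ Hom_U(P, hom^r(N,M))`,
`ξ(f)(p) = f(p ⊗ -)`, is a natural bijection.  Consequently, `U`-Mod is
biclosed monoidal (together with the left internal Homs of Statement 5). -/
theorem stmt_6 (lb : LeftBialgebroid k A U) (lh : LeftHopf k A U lb)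
    (N M P P' M' : Type)
    [AddCommGroup N] [Module k N] [Module U N] [IsScalarTower k U N]
    [AddCommGroup M] [Module k M] [Module U M] [IsScalarTower k U M]
    [AddCommGroup P] [Module k P] [Module U P] [IsScalarTower k U P]
    [AddCommGroup P'] [Module k P'] [Module U P'] [IsScalarTower k U P']
    [AddCommGroup M'] [Module k M'] [Module U M'] [IsScalarTower k U M'] :
    -- there is a left U-action `pm` on Hom_{Aᵒᵖ}(N, M) — `(u · g)(n) = u₊ g(u₋ n)`
    ∃ pm : U → (N →ₗ[k] M) → (N →ₗ[k] M),
      -- characterizing formula, via arbitrary finite decompositions of u₊ ⊗ u₋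
      (∀ (u : U) (g : N →ₗ[k] M), RightALin lb g →
        ∀ {κ : Type} [Fintype κ] (x y : κ → U),
          lh.pinv u - ∑ j, x j ⊗ₜ[k] y j ∈ relOp k A U lb.t →
            ∀ n : N, pm u g n = ∑ j, x j • g (y j • n)) ∧
      -- it preserves right A-linearity
      (∀ (u : U) (g : N →ₗ[k] M), RightALin lb g → RightALin lb (pm u g)) ∧
      -- and is a (k-compatible) left U-module structure on Hom_{Aᵒᵖ}(N, M)
      (∀ g : N →ₗ[k] M, RightALin lb g → pm (1 : U) g = g) ∧
      (∀ (u v : U) (g : N →ₗ[k] M), RightALin lb g →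
        pm (u * v) g = pm u (pm v g)) ∧
      (∀ (u v : U) (g : N →ₗ[k] M), RightALin lb g →
        pm (u + v) g = pm u g + pm v g) ∧
      (∀ (u : U) (g g' : N →ₗ[k] M), RightALin lb g → RightALin lb g' →
        pm u (g + g') = pm u g + pm u g') ∧
      (∀ (c : k) (u : U) (g : N →ₗ[k] M), RightALin lb g →
        pm (c • u) g = c • pm u g) ∧
      (∀ (c : k) (u : U) (g : N →ₗ[k] M), RightALin lb g →
        pm u (c • g) = c • pm u g) ∧
      -- the Hom-tensor adjunction ξ : Hom_U(P ⊗_A N, M) ≅ Hom_U(P, hom^r(N,M)),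
      -- ξ(f)(p) := f(p ⊗ -), is well defined, U-linear, bijective and natural:
      -- well-definedness
      (∀ f : P ⊗[k] N →ₗ[k] M, IsBalanced lb f → DiagEquiv lb f →
        ∀ p : P, RightALin lb (f ∘ₗ TensorProduct.mk k P N p)) ∧
      -- additivity, k-linearity and U-equivariance of p ↦ ξ(f)(p)
      (∀ (f : P ⊗[k] N →ₗ[k] M) (p p' : P),
        f ∘ₗ TensorProduct.mk k P N (p + p') =
          f ∘ₗ TensorProduct.mk k P N p + f ∘ₗ TensorProduct.mk k P N p') ∧
      (∀ (f : P ⊗[k] N →ₗ[k] M) (c : k) (p : P),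
        f ∘ₗ TensorProduct.mk k P N (c • p) = c • (f ∘ₗ TensorProduct.mk k P N p)) ∧
      (∀ f : P ⊗[k] N →ₗ[k] M, IsBalanced lb f → DiagEquiv lb f →
        ∀ (u : U) (p : P),
          f ∘ₗ TensorProduct.mk k P N (u • p) = pm u (f ∘ₗ TensorProduct.mk k P N p)) ∧
      -- injectivity
      (∀ f g : P ⊗[k] N →ₗ[k] M, IsBalanced lb f → DiagEquiv lb f →
        IsBalanced lb g → DiagEquiv lb g →
        (∀ p : P, f ∘ₗ TensorProduct.mk k P N p = g ∘ₗ TensorProduct.mk k P N p) →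
        f = g) ∧
      -- surjectivity
      (∀ G : P → (N →ₗ[k] M),
        (∀ p, RightALin lb (G p)) →
        (∀ p p', G (p + p') = G p + G p') →
        (∀ (c : k) (p : P), G (c • p) = c • G p) →
        (∀ (u : U) (p : P), G (u • p) = pm u (G p)) →
        ∃ f : P ⊗[k] N →ₗ[k] M, IsBalanced lb f ∧ DiagEquiv lb f ∧
          ∀ p, f ∘ₗ TensorProduct.mk k P N p = G p) ∧
      -- naturality in P
      (∀ (σ : P' →ₗ[k] P), (∀ (u : U) (p' : P'), σ (u • p') = u • σ p') →
        ∀ (f : P ⊗[k] N →ₗ[k] M) (p' : P'),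
          (f ∘ₗ TensorProduct.map σ (LinearMap.id : N →ₗ[k] N)) ∘ₗ
              TensorProduct.mk k P' N p' =
            f ∘ₗ TensorProduct.mk k P N (σ p')) ∧
      -- naturality in M
      (∀ (ω : M →ₗ[k] M'), (∀ (u : U) (m : M), ω (u • m) = u • ω m) →
        ∀ (f : P ⊗[k] N →ₗ[k] M) (p : P),
          (ω ∘ₗ f) ∘ₗ TensorProduct.mk k P N p = ω ∘ₗ (f ∘ₗ TensorProduct.mk k P N p)) ∧
      -- consequently, together with the left internal Homs of Statement 5
      -- (the adjunction ζ : Hom_U(N ⊗_A P, M) ≅ Hom_U(P, Hom_U(N ⊗_A U, M))),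
      -- the category of left U-modules is biclosed monoidal:
      (∀ f : N ⊗[k] P →ₗ[k] M, IsBalanced lb f → DiagEquiv lb f → ∀ p : P,
        IsBalanced lb (f ∘ₗ TensorProduct.map (LinearMap.id : N →ₗ[k] N)
          (actOn P p : U →ₗ[k] P)) ∧
        DiagEquiv lb (f ∘ₗ TensorProduct.map (LinearMap.id : N →ₗ[k] N)
          (actOn P p : U →ₗ[k] P))) ∧
      (∀ f g : N ⊗[k] P →ₗ[k] M, IsBalanced lb f → DiagEquiv lb f →
        IsBalanced lb g → DiagEquiv lb g →
        (∀ p : P, f ∘ₗ TensorProduct.map (LinearMap.id : N →ₗ[k] N)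
            (actOn P p : U →ₗ[k] P) =
          g ∘ₗ TensorProduct.map (LinearMap.id : N →ₗ[k] N)
            (actOn P p : U →ₗ[k] P)) → f = g) ∧
      (∀ G : P → (N ⊗[k] U →ₗ[k] M),
        (∀ p, IsBalanced lb (G p) ∧ DiagEquiv lb (G p)) →
        (∀ p p', G (p + p') = G p + G p') →
        (∀ (c : k) (p : P), G (c • p) = c • G p) →
        (∀ (u : U) (p : P), G (u • p) =
          (G p) ∘ₗ TensorProduct.map (LinearMap.id : N →ₗ[k] N)
            (LinearMap.mulRight k u)) →
        ∃ f : N ⊗[k] P →ₗ[k] M, IsBalanced lb f ∧ DiagEquiv lb f ∧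
          ∀ p, f ∘ₗ TensorProduct.map (LinearMap.id : N →ₗ[k] N)
            (actOn P p : U →ₗ[k] P) = G p) :=
  stmt_6_general lb lh N M P P' M'

end
end
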